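/- arXiv:2503.00281 — 6 statements merged into one kernel-verified Lean document; each statement's English description precedes it below -/
import Mathlib

section
/- Let δ be a real number with 0 < δ ≤ 1/5 and let C ⊆ V be a δ-clean set with B ⊆ C and |C| > (1/δ)·|B|. Then the number of negative edges both of whose endpoints lie in C \ B is at most 2·m(OPT_B). -/
open scoped Classical

/-- A signed graph: a finite vertex set with disjoint sets of positive and
negative edges (unordered pairs of distinct vertices). -/
structure SignedGraph (V : Type*) [Fintype V] [DecidableEq V] where
  pos : Finset (Sym2 V)
  neg : Finset (Sym2 V)
  pos_not_diag : ∀ e ∈ pos, ¬ e.IsDiag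
  neg_not_diag : ∀ e ∈ neg, ¬ e.IsDiag
  disjoint_pos_neg : Disjoint pos neg

namespace SignedGraph

variable {V : Type*} [Fintype V] [DecidableEq V]

def posAdj (G : SignedGraph V) (u v : V) : Prop := s(u, v) ∈ G.pos

def negAdj (G : SignedGraph V) (u v : V) : Prop := s(u, v) ∈ G.neg

/-- Positive neighbourhood `N⁺(v)`. -/
noncomputable def posNbr (G : SignedGraph V) (v : V) : Finset V :=
  Finset.univ.filter (fun u => G.posAdj v u)

/-- Negative neighbourhood `N⁻(v)`. -/
noncomputable def negNbr (G : SignedGraph V) (v : V) : Finset V :=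
  Finset.univ.filter (fun u => G.negAdj v u)

/-- Closed positive neighbourhood `N⁺[v] = N⁺(v) ∪ {v}`. -/
noncomputable def posNbrCl (G : SignedGraph V) (v : V) : Finset V :=
  insert v (G.posNbr v)

/-- `N⁺(B)`: the set of good vertices having a positive edge to some bad vertex. -/
noncomputable def posNbrSet (G : SignedGraph V) (B : Finset V) : Finset V :=
  Finset.univ.filter (fun v => v ∉ B ∧ ∃ u ∈ B, G.posAdj v u)

/-- `E⁺(X, Y)`: positive edges with one endpoint in `X` and the other in `Y`. -/
noncomputable def Eplus (G : SignedGraph V) (X Y : Finset V) : Finset (Sym2 V) :=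
  G.pos.filter (fun e => ∃ u ∈ X, ∃ v ∈ Y, e = s(u, v))

/-- `E⁻(X, Y)`: negative edges with one endpoint in `X` and the other in `Y`. -/
noncomputable def Eminus (G : SignedGraph V) (X Y : Finset V) : Finset (Sym2 V) :=
  G.neg.filter (fun e => ∃ u ∈ X, ∃ v ∈ Y, e = s(u, v))

/-- A clustering of `V`: a partition of `V` into nonempty parts. -/
def IsClustering (P : Finset (Finset V)) : Prop :=
  (∀ C ∈ P, C.Nonempty) ∧
  (∀ C ∈ P, ∀ C' ∈ P, C ≠ C' → Disjoint C C') ∧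
  ∀ v : V, ∃ C ∈ P, v ∈ C

/-- `u` and `v` lie in the same cluster of `P`. -/
def SameCluster (P : Finset (Finset V)) (u v : V) : Prop :=
  ∃ C ∈ P, u ∈ C ∧ v ∈ C

/-- `m(𝒞)`: number of mistakes of a clustering: negative edges within a
cluster plus positive edges between clusters. -/
noncomputable def mistakes (G : SignedGraph V) (P : Finset (Finset V)) : ℕ :=
  (G.neg.filter (fun e => ∃ u v : V, e = s(u, v) ∧ SameCluster P u v)).card +
  (G.pos.filter (fun e => ∃ u v : V, e = s(u, v) ∧ ¬ SameCluster P u v)).card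

/-- `m(OPT_B)`: minimum number of mistakes over clusterings in which `B` is
contained in a single cluster. -/
noncomputable def mOptB (G : SignedGraph V) (B : Finset V) : ℕ :=
  sInf {m : ℕ | ∃ P : Finset (Finset V),
    IsClustering P ∧ (∃ C ∈ P, B ⊆ C) ∧ m = G.mistakes P}

/-- A good vertex `v` is `δ`-good w.r.t. `C`. -/
def deltaGood (G : SignedGraph V) (δ : ℝ) (v : V) (C : Finset V) : Prop :=
  ((G.negNbr v ∩ C).card : ℝ) ≤ δ * C.card ∧
  ((G.posNbr v \ C).card : ℝ) ≤ δ * C.card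

/-- The set `B` of bad vertices is `δ`-good w.r.t. `C ⊇ B`. -/
def deltaGoodB (G : SignedGraph V) (δ : ℝ) (B C : Finset V) : Prop :=
  ((G.Eminus B (C \ B)).card : ℝ) ≤ δ * B.card * C.card ∧
  ((G.Eplus B Cᶜ).card : ℝ) ≤ δ * B.card * C.card

/-- `C` is `δ`-clean (w.r.t. the set `B` of bad vertices): every good vertex of
`C` is `δ`-good w.r.t. `C`, and if `B ⊆ C` then `B` is `δ`-good w.r.t. `C`. -/
def deltaClean (G : SignedGraph V) (δ : ℝ) (B C : Finset V) : Prop :=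
  (∀ v ∈ C, v ∉ B → G.deltaGood δ v C) ∧ (B ⊆ C → G.deltaGoodB δ B C)

/-- The structural assumptions on the signed graph w.r.t. the set `B` of bad
vertices: every pair of distinct good vertices is a positive or negative edge,
every pair of distinct bad vertices is a positive edge, and for each good
vertex the edges joining it to `B` are all positive or all negative. -/
def GoodBadStructure (G : SignedGraph V) (B : Finset V) : Prop :=
  (∀ u v : V, u ∉ B → v ∉ B → u ≠ v → G.posAdj u v ∨ G.negAdj u v) ∧
  (∀ u v : V, u ∈ B → v ∈ B → u ≠ v → G.posAdj u v) ∧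
  (∀ v : V, v ∉ B → (∀ u ∈ B, ¬ G.negAdj v u) ∨ (∀ u ∈ B, ¬ G.posAdj v u))

end SignedGraph

/-!
Write `A = C \ B`. All pairs in `A` are signed edges, and every vertex of `A` has at most
`d = ⌊δ|C|⌋` negative neighbours in `A`, where `3d ≤ |A|` because `|B| < δ|C|` and
`δ ≤ 1/5`.
Counting ordered pairs of `A`, it suffices that in any clustering the negative pairs split
between clusters are at most twice the positive ones, i.e. that
`3 · #(split negative pairs) ≤ 2 · #(split pairs)`. If every vertex of `A` has at least `3d/2`
vertices of `A` outside its cluster this holds vertex by vertex. Otherwise some cluster meets `A`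
in a set `X` with `|X| > |A| - 3d/2 ≥ 3d/2`; then there are at least `2|X||A \ X|` split pairs,
while every split negative pair meets `A \ X`, so there are at most `2d|A \ X|` of them.
-/

open Finset

lemma Sym2.exists_mk_eq_mk_and_iff {V : Type*} {r : V → V → Prop}
    (hr : ∀ a b, r a b → r b a) {v w : V} :
    (∃ a b, s(v, w) = s(a, b) ∧ r a b) ↔ r v w := by
  refine ⟨fun ⟨a, b, he, hab⟩ => ?_, fun h => ⟨v, w, rfl, h⟩⟩
  rcases Sym2.eq_iff.1 he with ⟨rfl, rfl⟩ | ⟨rfl, rfl⟩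
  exacts [hab, hr _ _ hab]

lemma sum_card_filter_mk_mem_eq_two_mul {V : Type*} [Fintype V] [DecidableEq V]
    (F : Finset (Sym2 V)) (hF : ∀ e ∈ F, ¬ e.IsDiag) (A : Finset V) :
    ∑ v ∈ A, #{w ∈ A | s(v, w) ∈ F} = 2 * #{e ∈ F | ∀ x ∈ e, x ∈ A} := by
  set H := SimpleGraph.fromEdgeSet ({e ∈ F | ∀ x ∈ e, x ∈ A} : Set (Sym2 V))
  have hadj : ∀ v w, H.Adj v w ↔ s(v, w) ∈ F ∧ v ∈ A ∧ w ∈ A := by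
    intro v w
    simp only [H, SimpleGraph.fromEdgeSet_adj, Set.mem_ofPred_eq, Sym2.mem_iff,
      forall_eq_or_imp, forall_eq]
    exact and_iff_left_of_imp fun h hvw => hF _ h.1 (by simp [hvw])
  have hdeg : ∀ v, H.degree v = if v ∈ A then #{w ∈ A | s(v, w) ∈ F} else 0 := by
    intro v
    rw [← SimpleGraph.card_neighborFinset_eq_degree]
    split_ifs with hv
    · congr 1; ext w; simp [hadj, hv, and_comm]
    · rw [card_eq_zero]; ext w; simp [hadj, hv]
  calc ∑ v ∈ A, #{w ∈ A | s(v, w) ∈ F} = ∑ v, H.degree v := by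
        simp [hdeg, sum_ite_mem]
    _ = 2 * #{e ∈ F | ∀ x ∈ e, x ∈ A} := by
        rw [H.sum_degrees_eq_twice_card_edges]
        congr 2
        ext e
        induction e using Sym2.ind with
        | _ v w => simp [hadj]

lemma sum_card_filter_le_two_mul_card {V : Type*} [Fintype V] [DecidableEq V]
    (F : Finset (Sym2 V)) (hF : ∀ e ∈ F, ¬ e.IsDiag) (A : Finset V) (r : V → V → Prop)
    [DecidableRel r] (hr : ∀ v w, r v w ↔ s(v, w) ∈ F) :
    ∑ v ∈ A, #{w ∈ A | r v w} ≤ 2 * #F :=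
  calc ∑ v ∈ A, #{w ∈ A | r v w} = ∑ v ∈ A, #{w ∈ A | s(v, w) ∈ F} :=
        sum_congr rfl fun v _ => congrArg card (filter_congr fun w _ => hr v w)
    _ = 2 * #{e ∈ F | ∀ x ∈ e, x ∈ A} := sum_card_filter_mk_mem_eq_two_mul F hF A
    _ ≤ 2 * #F := Nat.mul_le_mul_left _ (card_filter_le _ _)

section ClusterCounting

variable {α ι : Type*} [DecidableEq ι] {A : Finset α} {c : α → ι}
  {pos neg : α → α → Prop} [DecidableRel pos] [DecidableRel neg]

lemma card_cross_le_card_cross_pos_add_card_cross_neg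
    (hcomplete : ∀ v ∈ A, ∀ w ∈ A, v ≠ w → pos v w ∨ neg v w) {v : α}
    (hv : v ∈ A) :
    #{w ∈ A | c v ≠ c w}
      ≤ #{w ∈ A | pos v w ∧ c v ≠ c w} + #{w ∈ A | neg v w ∧ c v ≠ c w} := by
  refine (card_le_card fun w hw => ?_).trans (card_union_le _ _)
  obtain ⟨hwA, hcw⟩ := mem_filter.1 hw
  rcases hcomplete v hv w hwA (by rintro rfl; exact hcw rfl) with h | h
  · exact mem_union_left _ (mem_filter.2 ⟨hwA, h, hcw⟩)
  · exact mem_union_right _ (mem_filter.2 ⟨hwA, h, hcw⟩)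

lemma two_mul_card_mul_card_le_sum_card_cross (i : ι) :
    2 * (#{w ∈ A | c w = i} * #{w ∈ A | c w ≠ i})
      ≤ ∑ v ∈ A, #{w ∈ A | c v ≠ c w} := by
  rw [← sum_filter_add_sum_filter_not A (fun v => c v = i)]
  have hin : ∑ v ∈ A with c v = i, #{w ∈ A | c v ≠ c w}
      = #{w ∈ A | c w = i} * #{w ∈ A | c w ≠ i} := by
    rw [sum_congr rfl (g := fun _ => #{w ∈ A | c w ≠ i}), sum_const, smul_eq_mul]
    intro v hv
    simp only [(mem_filter.1 hv).2, ne_comm]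
  have hout : #{w ∈ A | ¬c w = i} * #{w ∈ A | c w = i}
      ≤ ∑ v ∈ A with ¬c v = i, #{w ∈ A | c v ≠ c w} := by
    rw [← smul_eq_mul]
    refine card_nsmul_le_sum _ _ _ fun v hv => card_le_card fun w hw => ?_
    simp only [mem_filter] at hv hw ⊢
    exact ⟨hw.1, hw.2 ▸ hv.2⟩
  simp only [ne_eq] at *
  linarith

lemma sum_card_cross_neg_le_two_mul_sum_outside (hsymm : ∀ v w, neg v w → neg w v) (i : ι) :
    ∑ v ∈ A, #{w ∈ A | neg v w ∧ c v ≠ c w}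
      ≤ 2 * ∑ v ∈ A with c v ≠ i, #{w ∈ A | neg v w ∧ c v ≠ c w} := by
  have hsplit : ∑ v ∈ A, #{w ∈ A | neg v w ∧ c v ≠ c w}
      = ∑ v ∈ A with c v = i, #{w ∈ A | neg v w ∧ c v ≠ c w}
        + ∑ v ∈ A with c v ≠ i, #{w ∈ A | neg v w ∧ c v ≠ c w} :=
    (sum_filter_add_sum_filter_not _ _ _).symm
  have hswap : ∑ v ∈ A with c v = i, #{w ∈ A | neg v w ∧ c v ≠ c w}
      ≤ ∑ v ∈ A with c v ≠ i, #{w ∈ A | neg v w ∧ c v ≠ c w} :=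
    calc ∑ v ∈ A with c v = i, #{w ∈ A | neg v w ∧ c v ≠ c w}
        = ∑ v ∈ A with c v = i, #({w ∈ A | c w ≠ i}.bipartiteAbove neg v) := by
          refine sum_congr rfl fun v hv => congrArg card ?_
          ext w
          simp only [bipartiteAbove, mem_filter, (mem_filter.1 hv).2, ne_comm]
          tauto
      _ = ∑ w ∈ A with c w ≠ i, #({v ∈ A | c v = i}.bipartiteBelow neg w) :=
          sum_card_bipartiteAbove_eq_sum_card_bipartiteBelow _
      _ ≤ ∑ w ∈ A with c w ≠ i, #{v ∈ A | neg w v ∧ c w ≠ c v} := by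
          refine sum_le_sum fun w hw => card_le_card fun v hv => ?_
          simp only [bipartiteBelow, mem_filter] at hv hw ⊢
          exact ⟨hv.1.1, hsymm _ _ hv.2, hv.1.2 ▸ hw.2⟩
  omega

lemma three_mul_sum_card_cross_neg_le (hsymm : ∀ v w, neg v w → neg w v) {d : ℕ}
    (hdeg : ∀ v ∈ A, #{w ∈ A | neg v w} ≤ d) (hd : 3 * d ≤ #A) :
    3 * ∑ v ∈ A, #{w ∈ A | neg v w ∧ c v ≠ c w}
      ≤ 2 * ∑ v ∈ A, #{w ∈ A | c v ≠ c w} := by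
  have hcross : ∀ v ∈ A, #{w ∈ A | neg v w ∧ c v ≠ c w} ≤ d := fun v hv =>
    (card_le_card fun _ hw => by
      simp only [mem_filter] at hw ⊢
      exact ⟨hw.1, hw.2.1⟩).trans (hdeg v hv)
  by_cases hsmall : ∃ u ∈ A, 2 * #{w ∈ A | c u ≠ c w} < 3 * d
  · -- the cluster of `u` then contains more than half of `A`
    obtain ⟨u, -, hu⟩ := hsmall
    have hpart : #{w ∈ A | c w = c u} + #{w ∈ A | c w ≠ c u} = #A :=
      card_filter_add_card_filter_not _
    have hcu : #{w ∈ A | c u ≠ c w} = #{w ∈ A | c w ≠ c u} := by simp only [ne_comm]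
    have hbig : #{w ∈ A | c w ≠ c u} * (3 * d)
        ≤ #{w ∈ A | c w ≠ c u} * (2 * #{w ∈ A | c w = c u}) :=
      Nat.mul_le_mul_left _ (by omega)
    have hoff : ∑ v ∈ A with c v ≠ c u, #{w ∈ A | neg v w ∧ c v ≠ c w}
        ≤ #{w ∈ A | c w ≠ c u} * d := by
      simpa using sum_le_card_nsmul _ _ d fun v hv => hcross v (mem_filter.1 hv).1
    have hcut := two_mul_card_mul_card_le_sum_card_cross (A := A) (c := c) (c u)
    have hswap := sum_card_cross_neg_le_two_mul_sum_outside (A := A) (c := c) hsymm (c u)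
    linarith
  · push Not at hsmall
    rw [mul_sum, mul_sum]
    exact sum_le_sum fun v hv => by linarith [hcross v hv, hsmall v hv]

lemma sum_card_cross_neg_le_two_mul_sum_card_cross_pos
    (hcomplete : ∀ v ∈ A, ∀ w ∈ A, v ≠ w → pos v w ∨ neg v w)
    (hsymm : ∀ v w, neg v w → neg w v)
    {d : ℕ} (hdeg : ∀ v ∈ A, #{w ∈ A | neg v w} ≤ d) (hd : 3 * d ≤ #A) :
    ∑ v ∈ A, #{w ∈ A | neg v w ∧ c v ≠ c w}
      ≤ 2 * ∑ v ∈ A, #{w ∈ A | pos v w ∧ c v ≠ c w} := by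
  have h3 := three_mul_sum_card_cross_neg_le (c := c) hsymm hdeg hd
  have hcross : ∑ v ∈ A, #{w ∈ A | c v ≠ c w}
      ≤ ∑ v ∈ A, #{w ∈ A | pos v w ∧ c v ≠ c w}
        + ∑ v ∈ A, #{w ∈ A | neg v w ∧ c v ≠ c w} := by
    rw [← sum_add_distrib]
    exact sum_le_sum fun v hv => card_cross_le_card_cross_pos_add_card_cross_neg hcomplete hv
  omega

lemma sum_card_neg_le_two_mul_sum_card_disagree
    (hcomplete : ∀ v ∈ A, ∀ w ∈ A, v ≠ w → pos v w ∨ neg v w)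
    (hsymm : ∀ v w, neg v w → neg w v)
    {d : ℕ} (hdeg : ∀ v ∈ A, #{w ∈ A | neg v w} ≤ d) (hd : 3 * d ≤ #A) :
    ∑ v ∈ A, #{w ∈ A | neg v w} ≤ 2 * (∑ v ∈ A, #{w ∈ A | neg v w ∧ c v = c w}
      + ∑ v ∈ A, #{w ∈ A | pos v w ∧ c v ≠ c w}) := by
  have hsplit : ∀ v, #{w ∈ A | neg v w}
      = #{w ∈ A | neg v w ∧ c v = c w} + #{w ∈ A | neg v w ∧ c v ≠ c w} := fun v => by
    rw [← card_filter_add_card_filter_not (s := {w ∈ A | neg v w}) (fun w => c v = c w),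
      filter_filter, filter_filter]
  rw [sum_congr rfl fun v _ => hsplit v, sum_add_distrib]
  have hcross := sum_card_cross_neg_le_two_mul_sum_card_cross_pos (c := c) hcomplete hsymm hdeg hd
  omega

end ClusterCounting

namespace SignedGraph

lemma IsClustering.exists_sameCluster_iff {V : Type*} {P : Finset (Finset V)}
    (hP : IsClustering P) :
    ∃ c : V → Finset V, ∀ u v, SameCluster P u v ↔ c u = c v := by
  choose c hcP hmem using hP.2.2
  have huniq : ∀ v, ∀ D ∈ P, v ∈ D → D = c v := fun v D hD hvD => by
    by_contra hne
    exact disjoint_left.1 (hP.2.1 D hD (c v) (hcP v) hne) hvD (hmem v)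
  exact ⟨c, fun u v =>
    ⟨fun ⟨D, hD, hu, hv⟩ => (huniq u D hD hu).symm.trans (huniq v D hD hv),
      fun h => ⟨c u, hcP u, hmem u, h ▸ hmem v⟩⟩⟩

lemma isClustering_singleton_univ {V : Type*} [Fintype V] [Nonempty V] :
    IsClustering {(univ : Finset V)} :=
  ⟨by simp [univ_nonempty], by simp, fun v => ⟨univ, mem_singleton_self _, mem_univ v⟩⟩

lemma exists_mistakes_eq_mOptB {V : Type*} [Fintype V] [DecidableEq V] [Nonempty V]
    (G : SignedGraph V) (B : Finset V) :
    ∃ P, IsClustering P ∧ G.mistakes P = G.mOptB B := by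
  obtain ⟨P, hP, -, hm⟩ := Nat.sInf_mem (s := {m | ∃ P : Finset (Finset V),
      IsClustering P ∧ (∃ C ∈ P, B ⊆ C) ∧ m = G.mistakes P})
    ⟨_, _, isClustering_singleton_univ, ⟨univ, mem_singleton_self _, subset_univ B⟩, rfl⟩
  exact ⟨P, hP, hm.symm⟩

lemma negAdj_symm {V : Type*} [Fintype V] [DecidableEq V] (G : SignedGraph V) {u v : V}
    (h : G.negAdj u v) : G.negAdj v u := by
  rwa [negAdj, Sym2.eq_swap]

lemma sum_card_mistakes_le {V : Type*} [Fintype V] [DecidableEq V] (G : SignedGraph V)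
    {P : Finset (Finset V)} {c : V → Finset V}
    (hc : ∀ u v, SameCluster P u v ↔ c u = c v) (A : Finset V) :
    ∑ v ∈ A, #{w ∈ A | G.negAdj v w ∧ c v = c w}
        + ∑ v ∈ A, #{w ∈ A | G.posAdj v w ∧ c v ≠ c w}
      ≤ 2 * G.mistakes P := by
  set Fneg := G.neg.filter fun e => ∃ u v : V, e = s(u, v) ∧ SameCluster P u v
  set Fpos := G.pos.filter fun e => ∃ u v : V, e = s(u, v) ∧ ¬ SameCluster P u v
  have hneg := sum_card_filter_le_two_mul_card Fneg
    (fun e he => G.neg_not_diag e (mem_filter.1 he).1) A (fun v w => G.negAdj v w ∧ c v = c w)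
    fun v w => by
      rw [mem_filter, Sym2.exists_mk_eq_mk_and_iff fun a b h => (hc b a).2 ((hc a b).1 h).symm,
        hc]
      rfl
  have hpos := sum_card_filter_le_two_mul_card Fpos
    (fun e he => G.pos_not_diag e (mem_filter.1 he).1) A (fun v w => G.posAdj v w ∧ c v ≠ c w)
    fun v w => by
      rw [mem_filter, Sym2.exists_mk_eq_mk_and_iff
        fun a b h h' => h ((hc a b).2 ((hc b a).1 h').symm), hc]
      rfl
  have hm : G.mistakes P = #Fneg + #Fpos := rfl
  omega

theorem card_neg_inside_le_two_mul_mistakes {V : Type*} [Fintype V] [DecidableEq V]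
    (G : SignedGraph V) {B C : Finset V} (hGB : G.GoodBadStructure B) {δ : ℝ} (hδ0 : 0 < δ)
    (hδ5 : δ ≤ 1 / 5) (hBC : B ⊆ C) (hclean : G.deltaClean δ B C)
    (hsize : (1 / δ) * (B.card : ℝ) < (C.card : ℝ)) {P : Finset (Finset V)}
    (hP : IsClustering P) :
    #{e ∈ G.neg | ∀ x ∈ e, x ∈ C \ B} ≤ 2 * G.mistakes P := by
  obtain ⟨c, hc⟩ := hP.exists_sameCluster_iff
  set A := C \ B
  have hB : (#B : ℝ) < δ * #C := by
    rwa [one_div, inv_mul_lt_iff₀ hδ0] at hsize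
  have hA : (#A : ℝ) = #C - #B := by
    rw [card_sdiff_of_subset hBC, Nat.cast_sub (card_le_card hBC)]
  have hdeg : ∀ v ∈ A, #{w ∈ A | G.negAdj v w} ≤ ⌊δ * #C⌋₊ := fun v hv => by
    obtain ⟨hvC, hvB⟩ := mem_sdiff.1 hv
    refine Nat.le_floor (le_trans (Nat.cast_le.2 (card_le_card fun w hw => ?_))
      (hclean.1 v hvC hvB).1)
    obtain ⟨hwA, hvw⟩ := mem_filter.1 hw
    exact mem_inter.2 ⟨mem_filter.2 ⟨mem_univ w, hvw⟩, (mem_sdiff.1 hwA).1⟩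
  have hd : 3 * ⌊δ * #C⌋₊ ≤ #A := by
    have hfloor := Nat.floor_le (by positivity : (0 : ℝ) ≤ δ * #C)
    exact_mod_cast (by nlinarith : (3 * ⌊δ * #C⌋₊ : ℝ) ≤ #A)
  have hcomplete : ∀ v ∈ A, ∀ w ∈ A, v ≠ w → G.posAdj v w ∨ G.negAdj v w :=
    fun v hv w hw => hGB.1 v w (mem_sdiff.1 hv).2 (mem_sdiff.1 hw).2
  have hcount := sum_card_filter_mk_mem_eq_two_mul G.neg G.neg_not_diag A
  have hcore := sum_card_neg_le_two_mul_sum_card_disagree (c := c) hcomplete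
    (fun _ _ => G.negAdj_symm) hdeg hd
  have hmist := G.sum_card_mistakes_le hc A
  have hneg : ∑ v ∈ A, #{w ∈ A | s(v, w) ∈ G.neg} = ∑ v ∈ A, #{w ∈ A | G.negAdj v w} :=
    sum_congr rfl fun v _ => congrArg card (filter_congr fun w _ => Iff.rfl)
  omega

end SignedGraph

/-- If `C ⊇ B` is `δ`-clean with `0 < δ ≤ 1/5` and
`|C| > (1/δ)·|B|`, then the number of negative edges with both endpoints in
`C \ B` is at most `2·m(OPT_B)`. -/
theorem stmt0 {V : Type*} [Fintype V] [DecidableEq V] (G : SignedGraph V)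
    (B : Finset V) (hGB : G.GoodBadStructure B)
    (δ : ℝ) (hδ0 : 0 < δ) (hδ5 : δ ≤ 1 / 5)
    (C : Finset V) (hBC : B ⊆ C) (hclean : G.deltaClean δ B C)
    (hsize : (1 / δ) * (B.card : ℝ) < (C.card : ℝ)) :
    ((G.neg.filter (fun e => ∀ x ∈ e, x ∈ C \ B)).card : ℝ) ≤ 2 * G.mOptB B := by
  have hC : 0 < C.card := by
    exact_mod_cast (by positivity : (0 : ℝ) ≤ (1 / δ) * B.card).trans_lt hsize
  have : Nonempty V := (card_pos.1 hC).to_subtype.map Subtype.val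
  obtain ⟨P, hP, hPopt⟩ := G.exists_mistakes_eq_mOptB B
  rw [← hPopt]
  exact_mod_cast G.card_neg_inside_le_two_mul_mistakes hGB hδ0 hδ5 hBC hclean hsize hP
end

section
/- Let δ be a real number with 0 < δ ≤ 1/5 and let C ⊆ V be a δ-clean set with B ⊆ C, |C| > (1/δ)·|B|, and |E⁺(B, C \ B)| ≥ |E⁻(B, C \ B)|. Then the number of negative edges with both endpoints in C is at most 3·m(OPT_B). -/
open scoped Classical

/-!
Fix a clustering `P` that keeps `B` in one cluster and makes `m(OPT_B)` mistakes. The negative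
edges of `C` inside a cluster are mistakes of `P`, so it suffices to exhibit positive edges cut by
`P` that number at least a third of the negative edges of `C` cut by `P`. Cleanliness bounds the
negative degree in `C` of a good vertex of `C` by `δ|C|`; since good vertices are pairwise joined,
such a vertex outside `W ⊆ C` has at least `|W| - δ|C| - |W ∩ B|` positive neighbours in `W`.

If every cluster holds at most half of `C`, each good vertex of `C` thus has about `|C|/2` positive
neighbours in `C` outside its cluster, against at most `δ|C|` negative ones, and the negative edges
at `B` number at most `δ|B||C|` as `B` is `δ`-good. If a cluster `D` holds more than half of `C`,
every cut negative edge of `C` has an endpoint in `C \ D`, and each good vertex of `C \ D` sends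
about `|D ∩ C|` positive edges into `D`. When `B` is not inside `D`, the hypothesis
`|E⁻(B, C \ B)| ≤ |E⁺(B, C \ B)|` trades the negative edges at `B` for positive ones: at most
`|B| |C \ D|` of those stay in `C \ D`, and the others are cut by `P`.
-/

open Finset

namespace Finset
variable {V : Type*} [DecidableEq V]

theorem card_filter_mk_mem_product (E : Finset (Sym2 V)) (U W : Finset V) :
    #{p ∈ U ×ˢ W | s(p.1, p.2) ∈ E} = ∑ u ∈ U, #{v ∈ W | s(u, v) ∈ E} := by
  simp only [card_filter, sum_product]

theorem card_filter_exists_mk_le (E : Finset (Sym2 V)) (U W : Finset V) :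
    #{e ∈ E | ∃ u ∈ U, ∃ v ∈ W, e = s(u, v)} ≤
      ∑ u ∈ U, #{v ∈ W | s(u, v) ∈ E} := by
  rw [← card_filter_mk_mem_product]
  refine card_le_card_of_surjOn (fun p => s(p.1, p.2)) fun e he => ?_
  obtain ⟨he, u, hu, v, hv, rfl⟩ := mem_filter.mp he
  exact ⟨(u, v), by simp [hu, hv, he], rfl⟩

theorem card_filter_exists_mk_eq {U W : Finset V} (E : Finset (Sym2 V)) (hUW : Disjoint U W) :
    #{e ∈ E | ∃ u ∈ U, ∃ v ∈ W, e = s(u, v)} =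
      ∑ u ∈ U, #{v ∈ W | s(u, v) ∈ E} := by
  refine (card_filter_exists_mk_le E U W).antisymm ?_
  rw [← card_filter_mk_mem_product]
  refine card_le_card_of_injOn (fun p => s(p.1, p.2)) (fun p hp => ?_) fun p hp q hq hpq => ?_
  · simp only [mem_coe, mem_filter, mem_product] at hp ⊢
    exact ⟨hp.2, p.1, hp.1.1, p.2, hp.1.2, rfl⟩
  · simp only [mem_coe, mem_filter, mem_product] at hp hq
    rcases Sym2.eq_iff.mp hpq with ⟨h1, h2⟩ | ⟨h1, -⟩
    · exact Prod.ext h1 h2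
    · exact absurd (h1 ▸ hq.1.2) (disjoint_left.mp hUW hp.1.1)

variable [Fintype V]

theorem sum_card_filter_mk_mem (T : Finset (Sym2 V)) (hT : ∀ e ∈ T, ¬ e.IsDiag) :
    ∑ x, #{y | s(x, y) ∈ T} = 2 * #T := by
  let H := SimpleGraph.fromEdgeSet (T : Set (Sym2 V))
  convert H.sum_degrees_eq_twice_card_edges using 3
  · rw [← H.card_neighborFinset_eq_degree]
    congr 1
    ext y
    simp only [SimpleGraph.mem_neighborFinset, SimpleGraph.fromEdgeSet_adj, mem_coe, mem_filter,
      mem_univ, true_and, H]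
    exact ⟨fun h => ⟨h, fun hxy => hT _ h (by simp [hxy])⟩, And.left⟩
  · ext e
    simp only [SimpleGraph.mem_edgeFinset, H, SimpleGraph.edgeSet_fromEdgeSet, Set.mem_sdiff,
      mem_coe, Sym2.mem_diagSet]
    exact ⟨fun he => ⟨he, hT e he⟩, And.left⟩

theorem sum_card_filter_mk_mem_le {T : Finset (Sym2 V)} (hT : ∀ e ∈ T, ¬ e.IsDiag)
    (U : Finset V) (W : V → Finset V) :
    ∑ x ∈ U, #{y ∈ W x | s(x, y) ∈ T} ≤ 2 * #T :=
  calc ∑ x ∈ U, #{y ∈ W x | s(x, y) ∈ T}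
      ≤ ∑ x ∈ U, #{y | s(x, y) ∈ T} :=
        sum_le_sum fun _ _ => card_le_card (filter_subset_filter _ (subset_univ _))
    _ ≤ ∑ x, #{y | s(x, y) ∈ T} := sum_le_sum_of_subset (subset_univ U)
    _ = 2 * #T := sum_card_filter_mk_mem T hT

theorem sum_card_filter_mk_mem_of_subset_sym2 {T : Finset (Sym2 V)} {U : Finset V}
    (hT : ∀ e ∈ T, ¬ e.IsDiag) (hTU : T ⊆ U.sym2) :
    ∑ x ∈ U, #{y ∈ U | s(x, y) ∈ T} = 2 * #T := by
  have hfilter : ∀ x, {y ∈ U | s(x, y) ∈ T} = ({y | s(x, y) ∈ T} : Finset V) := fun x => by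
    ext y
    simpa using fun h => (mk_mem_sym2_iff.mp (hTU h)).2
  calc ∑ x ∈ U, #{y ∈ U | s(x, y) ∈ T} = ∑ x ∈ U, #{y | s(x, y) ∈ T} :=
        sum_congr rfl fun x _ => by rw [hfilter]
    _ = ∑ x, #{y | s(x, y) ∈ T} :=
        sum_subset (subset_univ U) fun x _ hx => card_eq_zero.mpr <|
          filter_eq_empty_iff.mpr fun y _ h => hx (mk_mem_sym2_iff.mp (hTU h)).1
    _ = 2 * #T := sum_card_filter_mk_mem T hT

end Finset

theorem Sym2.exists_eq_mk_and_iff {α : Type*} (p : Sym2 α → Prop) (e : Sym2 α) :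
    (∃ u v, e = s(u, v) ∧ p s(u, v)) ↔ p e := by
  refine ⟨fun ⟨u, v, he, h⟩ => he ▸ h, fun h => ?_⟩
  induction e using Sym2.ind with
  | h u v => exact ⟨u, v, rfl, h⟩

namespace SignedGraph

section Clusters

variable {V : Type*} {P : Finset (Finset V)}

def InCluster (P : Finset (Finset V)) (e : Sym2 V) : Prop := ∃ D ∈ P, e ∈ D.sym2

theorem inCluster_mk {u v : V} : InCluster P s(u, v) ↔ SameCluster P u v := by
  simp only [InCluster, SameCluster, mk_mem_sym2_iff]

variable [DecidableEq V]

theorem IsClustering.sameCluster_iff (hP : IsClustering P) {D : Finset V} (hD : D ∈ P) {u : V}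
    (hu : u ∈ D) {v : V} : SameCluster P u v ↔ v ∈ D := by
  refine ⟨fun ⟨D', hD', huD', hvD'⟩ => ?_, fun hv => ⟨D, hD, hu, hv⟩⟩
  by_contra hvD
  have hne : D' ≠ D := fun h => hvD (h ▸ hvD')
  exact disjoint_left.mp (hP.2.1 D' hD' D hD hne) huD' hu

end Clusters

variable {V : Type*} [Fintype V] [DecidableEq V]

section Counting

variable (G : SignedGraph V)

theorem posNbr_inter (u : V) (W : Finset V) : G.posNbr u ∩ W = {v ∈ W | s(u, v) ∈ G.pos} := by
  ext v
  simp only [posNbr, mem_inter, mem_filter, mem_univ, true_and]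
  exact and_comm

theorem negNbr_inter (u : V) (W : Finset V) : G.negNbr u ∩ W = {v ∈ W | s(u, v) ∈ G.neg} := by
  ext v
  simp only [negNbr, mem_inter, mem_filter, mem_univ, true_and]
  exact and_comm

theorem card_Eplus_le_sum (U W : Finset V) :
    #(G.Eplus U W) ≤ ∑ u ∈ U, #(G.posNbr u ∩ W) := by
  simpa only [Eplus, posNbr_inter] using card_filter_exists_mk_le G.pos U W

theorem card_Eplus_eq_sum {U W : Finset V} (hUW : Disjoint U W) :
    #(G.Eplus U W) = ∑ u ∈ U, #(G.posNbr u ∩ W) := by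
  simpa only [Eplus, posNbr_inter] using card_filter_exists_mk_eq G.pos hUW

theorem card_Eplus_le_card_mul_card (U W : Finset V) : #(G.Eplus U W) ≤ #U * #W :=
  calc #(G.Eplus U W) ≤ ∑ u ∈ U, #(G.posNbr u ∩ W) := G.card_Eplus_le_sum U W
    _ ≤ ∑ _u ∈ U, #W := sum_le_sum fun _ _ => card_le_card inter_subset_right
    _ = #U * #W := by rw [sum_const, smul_eq_mul]

theorem card_Eminus_le_sum (U W : Finset V) :
    #(G.Eminus U W) ≤ ∑ u ∈ U, #(G.negNbr u ∩ W) := by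
  simpa only [Eminus, negNbr_inter] using card_filter_exists_mk_le G.neg U W

theorem two_mul_card_filter_neg_mem_sym2 (U : Finset V) :
    2 * #{e ∈ G.neg | e ∈ U.sym2} = ∑ u ∈ U, #(G.negNbr u ∩ U) := by
  rw [← sum_card_filter_mk_mem_of_subset_sym2 (fun e he => G.neg_not_diag e (mem_filter.mp he).1)
    fun e he => (mem_filter.mp he).2]
  refine sum_congr rfl fun u hu => ?_
  rw [negNbr_inter]
  congr 1
  ext v
  simp +contextual [hu]

noncomputable def negCut (P : Finset (Finset V)) (C : Finset V) : Finset (Sym2 V) :=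
  {e ∈ G.neg | e ∈ C.sym2 ∧ ¬ InCluster P e}

noncomputable def posCut (P : Finset (Finset V)) (C : Finset V) : Finset (Sym2 V) :=
  {e ∈ G.pos | e ∈ C.sym2 ∧ ¬ InCluster P e}

theorem mistakes_eq (P : Finset (Finset V)) :
    G.mistakes P = #{e ∈ G.neg | InCluster P e} + #{e ∈ G.pos | ¬ InCluster P e} := by
  simp only [mistakes, ← inCluster_mk, Sym2.exists_eq_mk_and_iff (InCluster P),
    Sym2.exists_eq_mk_and_iff (¬ InCluster P ·)]

theorem exists_isClustering_mistakes_eq_mOptB [Nonempty V] (B : Finset V) :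
    ∃ P, IsClustering P ∧ (∃ D ∈ P, B ⊆ D) ∧ G.mistakes P = G.mOptB B := by
  have hne : {m : ℕ | ∃ P : Finset (Finset V),
      IsClustering P ∧ (∃ D ∈ P, B ⊆ D) ∧ m = G.mistakes P}.Nonempty :=
    ⟨_, {univ}, ⟨by simp, by simp, by simp⟩, ⟨univ, mem_singleton_self _, subset_univ B⟩,
      rfl⟩
  obtain ⟨P, hP, hB, hm⟩ := Nat.sInf_mem hne
  exact ⟨P, hP, hB, hm.symm⟩

theorem card_le_three_mul_mistakes {P : Finset (Finset V)} {C : Finset V}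
    {Pc : Finset (Sym2 V)} (hPc : Pc ⊆ {e ∈ G.pos | ¬ InCluster P e})
    (hcut : #(G.negCut P C) ≤ 3 * #Pc) : #{e ∈ G.neg | e ∈ C.sym2} ≤ 3 * G.mistakes P := by
  have hsplit : #{e ∈ {e ∈ G.neg | e ∈ C.sym2} | InCluster P e} + #(G.negCut P C) =
      #{e ∈ G.neg | e ∈ C.sym2} := by
    rw [negCut, ← filter_filter]
    exact card_filter_add_card_filter_not _
  have hin : #{e ∈ {e ∈ G.neg | e ∈ C.sym2} | InCluster P e} ≤
      #{e ∈ G.neg | InCluster P e} :=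
    card_le_card (filter_subset_filter _ (filter_subset _ _))
  have hPc' := card_le_card hPc
  rw [mistakes_eq]
  omega

end Counting

variable {G : SignedGraph V} {B C : Finset V} {δ : ℝ} {P : Finset (Finset V)} {D : Finset V}

theorem Eplus_subset_union {X Y Y₁ Y₂ : Finset V} (h : Y ⊆ Y₁ ∪ Y₂) :
    G.Eplus X Y ⊆ G.Eplus X Y₁ ∪ G.Eplus X Y₂ := by
  intro e he
  obtain ⟨hpos, u, hu, v, hv, rfl⟩ := mem_filter.mp he
  rcases mem_union.mp (h hv) with hv | hv
  · exact mem_union_left _ (mem_filter.mpr ⟨hpos, u, hu, v, hv, rfl⟩)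
  · exact mem_union_right _ (mem_filter.mpr ⟨hpos, u, hu, v, hv, rfl⟩)

theorem IsClustering.Eplus_subset (hP : IsClustering P) (hD : D ∈ P) :
    G.Eplus (C \ D) (D ∩ C) ⊆ {e ∈ G.pos | ¬ InCluster P e} := by
  intro e he
  obtain ⟨hpos, u, hu, v, hv, rfl⟩ := mem_filter.mp he
  refine mem_filter.mpr ⟨hpos, ?_⟩
  rw [Sym2.eq_swap, inCluster_mk, hP.sameCluster_iff hD (mem_inter.mp hv).1]
  exact (mem_sdiff.mp hu).2

theorem GoodBadStructure.mk_notMem_neg (hGB : G.GoodBadStructure B) {u v : V} (hu : u ∈ B)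
    (hv : v ∈ B) : s(u, v) ∉ G.neg := fun h => by
  have huv : u ≠ v := fun huv => G.neg_not_diag _ h (by simp [huv])
  exact disjoint_left.mp G.disjoint_pos_neg (hGB.2.1 u v hu hv huv) h

theorem GoodBadStructure.card_le_card_posNbr_inter_add (hGB : G.GoodBadStructure B) {u : V}
    {W : Finset V} (hu : u ∉ B) (huW : u ∉ W) :
    #W ≤ #(G.posNbr u ∩ W) + #(G.negNbr u ∩ W) + #(W ∩ B) := by
  have hW : W ⊆ G.posNbr u ∩ W ∪ G.negNbr u ∩ W ∪ W ∩ B := fun v hv => by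
    by_cases hvB : v ∈ B
    · simp [hv, hvB]
    · have huv : u ≠ v := fun h => huW (h ▸ hv)
      simpa [posNbr, negNbr, hv, hvB] using hGB.1 u v hu hvB huv
  exact (card_le_card hW).trans <| (card_union_le _ _).trans <|
    Nat.add_le_add_right (card_union_le _ _) _

theorem GoodBadStructure.filter_neg_mem_sym2_subset (hGB : G.GoodBadStructure B) (C : Finset V) :
    {e ∈ G.neg | e ∈ C.sym2} ⊆ {e ∈ G.neg | e ∈ (C \ B).sym2} ∪ G.Eminus B (C \ B) := by
  intro e he
  induction e using Sym2.ind with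
  | h x y =>
    obtain ⟨hneg, hx, hy⟩ : s(x, y) ∈ G.neg ∧ x ∈ C ∧ y ∈ C := by simpa using he
    simp only [mem_union, mem_filter, mk_mem_sym2_iff, mem_sdiff, Eminus]
    by_cases hxB : x ∈ B
    · have hyB : y ∉ B := fun hyB => hGB.mk_notMem_neg hxB hyB hneg
      exact Or.inr ⟨hneg, x, hxB, y, ⟨hy, hyB⟩, rfl⟩
    by_cases hyB : y ∈ B
    · exact Or.inr ⟨hneg, y, hyB, x, ⟨hx, hxB⟩, Sym2.eq_swap⟩
    · exact Or.inl ⟨hneg, ⟨hx, hxB⟩, hy, hyB⟩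

theorem deltaClean.sum_card_negNbr_inter_le (hclean : G.deltaClean δ B C) {U W : Finset V}
    (hU : U ⊆ C \ B) (hW : W ⊆ C) :
    (∑ u ∈ U, #(G.negNbr u ∩ W) : ℝ) ≤ #U * (δ * #C) := by
  refine (sum_le_card_nsmul U _ _ fun u hu => ?_).trans_eq (nsmul_eq_mul _ _)
  obtain ⟨huC, huB⟩ := mem_sdiff.mp (hU hu)
  exact le_trans (by gcongr) (hclean.1 u huC huB).1

theorem deltaClean.le_card_posNbr_inter (hGB : G.GoodBadStructure B)
    (hclean : G.deltaClean δ B C) {x : V} {W : Finset V} (hx : x ∈ C) (hxB : x ∉ B)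
    (hWC : W ⊆ C) (hxW : x ∉ W) :
    (#W : ℝ) - δ * #C - #(W ∩ B) ≤ #(G.posNbr x ∩ W) := by
  have hcount : (#W : ℝ) ≤ #(G.posNbr x ∩ W) + #(G.negNbr x ∩ W) + #(W ∩ B) := by
    exact_mod_cast hGB.card_le_card_posNbr_inter_add hxB hxW
  have hneg : (#(G.negNbr x ∩ W) : ℝ) ≤ δ * #C :=
    le_trans (by gcongr) (hclean.1 x hx hxB).1
  linarith

theorem deltaClean.card_mul_le_sum_card_posNbr_inter (hGB : G.GoodBadStructure B)
    (hclean : G.deltaClean δ B C) {U W : Finset V} (hU : U ⊆ C \ B) (hWC : W ⊆ C)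
    (hUW : Disjoint U W) :
    (#U : ℝ) * (#W - δ * #C - #(W ∩ B)) ≤ ∑ x ∈ U, (#(G.posNbr x ∩ W) : ℝ) := by
  rw [← nsmul_eq_mul]
  refine card_nsmul_le_sum _ _ _ fun x hx => ?_
  obtain ⟨hxC, hxB⟩ := mem_sdiff.mp (hU hx)
  exact hclean.le_card_posNbr_inter hGB hxC hxB hWC (disjoint_left.mp hUW hx)

theorem IsClustering.le_card_posNbr_inter_not_sameCluster (hP : IsClustering P)
    (hGB : G.GoodBadStructure B) (hclean : G.deltaClean δ B C)
    (hsmall : ∀ D ∈ P, (#(D ∩ C) : ℝ) ≤ #C / 2) {x : V} (hx : x ∈ C \ B) :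
    (#C : ℝ) / 2 - δ * #C - #B ≤ #(G.posNbr x ∩ {y ∈ C | ¬ SameCluster P x y}) := by
  obtain ⟨D, hD, hxD⟩ := hP.2.2 x
  have hW : {y ∈ C | ¬ SameCluster P x y} = C \ D := by
    ext y
    simp [hP.sameCluster_iff hD hxD]
  rw [hW]
  have hpos := hclean.le_card_posNbr_inter hGB (mem_sdiff.mp hx).1 (mem_sdiff.mp hx).2
    sdiff_subset fun h => (mem_sdiff.mp h).2 hxD
  have hsplit : (#(C \ D) : ℝ) + #(D ∩ C) = #C := by
    rw [inter_comm]
    exact_mod_cast card_sdiff_add_card_inter C D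
  have hB : (#(C \ D ∩ B) : ℝ) ≤ #B := by exact_mod_cast card_le_card inter_subset_right
  linarith [hsmall D hD]

theorem IsClustering.card_mul_le_two_mul_card_posCut (hGB : G.GoodBadStructure B)
    (hclean : G.deltaClean δ B C) (hP : IsClustering P)
    (hsmall : ∀ D ∈ P, (#(D ∩ C) : ℝ) ≤ #C / 2) :
    (#(C \ B) : ℝ) * (#C / 2 - δ * #C - #B) ≤ 2 * #(G.posCut P C) := by
  have hsum : ∑ x ∈ C \ B, #(G.posNbr x ∩ {y ∈ C | ¬ SameCluster P x y}) ≤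
      2 * #(G.posCut P C) := by
    refine le_trans (sum_le_sum fun x hx => card_le_card fun y hy => ?_)
      (sum_card_filter_mk_mem_le (fun e he => G.pos_not_diag e (mem_filter.mp he).1) (C \ B)
        fun x => {y ∈ C | ¬ SameCluster P x y})
    rw [posNbr_inter] at hy
    obtain ⟨hyW, hpos⟩ := mem_filter.mp hy
    obtain ⟨hyC, hxy⟩ := mem_filter.mp hyW
    exact mem_filter.mpr ⟨hyW, mem_filter.mpr ⟨hpos,
      mk_mem_sym2_iff.mpr ⟨(mem_sdiff.mp hx).1, hyC⟩, fun h => hxy (inCluster_mk.mp h)⟩⟩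
  calc (#(C \ B) : ℝ) * (#C / 2 - δ * #C - #B)
      ≤ ∑ x ∈ C \ B, (#(G.posNbr x ∩ {y ∈ C | ¬ SameCluster P x y}) : ℝ) := by
        rw [← nsmul_eq_mul]
        exact card_nsmul_le_sum _ _ _ fun x hx =>
          hP.le_card_posNbr_inter_not_sameCluster hGB hclean hsmall hx
    _ ≤ 2 * #(G.posCut P C) := by exact_mod_cast hsum

theorem IsClustering.card_negCut_le_of_forall_card_inter_le (hGB : G.GoodBadStructure B)
    (hδ : δ ≤ 1 / 5) (hclean : G.deltaClean δ B C) (hBC : B ⊆ C)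
    (hB : (#B : ℝ) ≤ δ * #C) (hP : IsClustering P)
    (hsmall : ∀ D ∈ P, (#(D ∩ C) : ℝ) ≤ #C / 2) :
    (#(G.negCut P C) : ℝ) ≤ 3 * #(G.posCut P C) := by
  have hcut : (#(G.negCut P C) : ℝ) ≤
      #{e ∈ G.neg | e ∈ (C \ B).sym2} + #(G.Eminus B (C \ B)) := by
    have hsub : G.negCut P C ⊆ {e ∈ G.neg | e ∈ C.sym2} :=
      monotone_filter_right G.neg fun _ _ h => h.1
    exact_mod_cast (card_le_card (hsub.trans (hGB.filter_neg_mem_sym2_subset C))).trans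
      (card_union_le _ _)
  have hgood : 2 * (#{e ∈ G.neg | e ∈ (C \ B).sym2} : ℝ) ≤ #(C \ B) * (δ * #C) :=
    calc 2 * (#{e ∈ G.neg | e ∈ (C \ B).sym2} : ℝ)
        = ∑ u ∈ C \ B, (#(G.negNbr u ∩ (C \ B)) : ℝ) := by
          exact_mod_cast G.two_mul_card_filter_neg_mem_sym2 (C \ B)
      _ ≤ #(C \ B) * (δ * #C) := hclean.sum_card_negNbr_inter_le subset_rfl sdiff_subset
  have hbad : (#(G.Eminus B (C \ B)) : ℝ) ≤ δ * #B * #C := (hclean.2 hBC).1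
  have hpos := hP.card_mul_le_two_mul_card_posCut hGB hclean hsmall
  have hCB : (#(C \ B) : ℝ) = #C - #B := by
    rw [card_sdiff_of_subset hBC, Nat.cast_sub (card_le_card hBC)]
  rw [hCB] at hgood hpos
  -- The estimate is tight at `δ = 1/5`, `|B| = δ|C|`, so the certificate below has to be exact.
  have h1 : (0 : ℝ) ≤ δ * #C - #B := by linarith
  have h2 : (0 : ℝ) ≤ #C - 5 * (δ * #C) := by nlinarith
  have h3 : (0 : ℝ) ≤ #B := by positivity
  nlinarith [mul_nonneg h1 h2, mul_nonneg h1 h3, mul_nonneg h2 h3, mul_nonneg h2 h2]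

theorem IsClustering.negCut_subset (hGB : G.GoodBadStructure B) (hP : IsClustering P)
    (hD : D ∈ P) :
    G.negCut P C ⊆ G.Eminus ((C \ D) \ B) C ∪ G.Eminus (B \ D) (C \ B) := by
  have key : ∀ x y, s(x, y) ∈ G.neg → x ∈ C → y ∈ C → x ∉ D →
      s(x, y) ∈ G.Eminus ((C \ D) \ B) C ∪ G.Eminus (B \ D) (C \ B) := by
    intro x y hneg hx hy hxD
    simp only [mem_union, Eminus, mem_filter, mem_sdiff]
    by_cases hxB : x ∈ B
    · have hyB : y ∉ B := fun hyB => hGB.mk_notMem_neg hxB hyB hneg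
      exact Or.inr ⟨hneg, x, ⟨hxB, hxD⟩, y, ⟨hy, hyB⟩, rfl⟩
    · exact Or.inl ⟨hneg, x, ⟨⟨hx, hxD⟩, hxB⟩, y, hy, rfl⟩
  intro e he
  induction e using Sym2.ind with
  | h x y =>
    simp only [negCut, mem_filter, mk_mem_sym2_iff, inCluster_mk] at he
    obtain ⟨hneg, ⟨hx, hy⟩, hcut⟩ := he
    by_cases hxD : x ∈ D
    · rw [hP.sameCluster_iff hD hxD] at hcut
      rw [Sym2.eq_swap] at hneg ⊢
      exact key y x hneg hy hx hcut
    · exact key x y hneg hx hy hxD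

theorem IsClustering.card_negCut_le (hGB : G.GoodBadStructure B) (hclean : G.deltaClean δ B C)
    (hP : IsClustering P) (hD : D ∈ P) :
    (#(G.negCut P C) : ℝ) ≤ #((C \ D) \ B) * (δ * #C) + #(G.Eminus (B \ D) (C \ B)) := by
  have hcut : (#(G.negCut P C) : ℝ) ≤
      #(G.Eminus ((C \ D) \ B) C) + #(G.Eminus (B \ D) (C \ B)) := by
    exact_mod_cast (card_le_card (hP.negCut_subset hGB hD)).trans (card_union_le _ _)
  have hgood : (#(G.Eminus ((C \ D) \ B) C) : ℝ) ≤ #((C \ D) \ B) * (δ * #C) :=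
    le_trans (by exact_mod_cast G.card_Eminus_le_sum _ _)
      (hclean.sum_card_negNbr_inter_le (sdiff_subset_sdiff sdiff_subset subset_rfl) subset_rfl)
  linarith

theorem IsClustering.card_negCut_le_of_subset (hGB : G.GoodBadStructure B) (hδ : δ ≤ 1 / 5)
    (hclean : G.deltaClean δ B C) (hB : (#B : ℝ) ≤ δ * #C) (hP : IsClustering P)
    (hD : D ∈ P) (hbig : (#C : ℝ) / 2 < #(D ∩ C)) (hBD : B ⊆ D) :
    (#(G.negCut P C) : ℝ) ≤ 3 * #(G.Eplus (C \ D) (D ∩ C)) := by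
  have hcut := hP.card_negCut_le hGB hclean hD
  have hempty : G.Eminus (B \ D) (C \ B) = ∅ := by
    simp [Eminus, sdiff_eq_empty_iff_subset.mpr hBD]
  have hgood : (#((C \ D) \ B) : ℝ) ≤ #(C \ D) := by exact_mod_cast card_le_card sdiff_subset
  have hdisj : Disjoint (C \ D) (D ∩ C) := inter_comm C D ▸ disjoint_sdiff_inter C D
  have hpos := hclean.card_mul_le_sum_card_posNbr_inter hGB (sdiff_subset_sdiff subset_rfl hBD)
    inter_subset_right hdisj
  rw [← Nat.cast_sum, ← card_Eplus_eq_sum _ hdisj] at hpos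
  have hW : (#(D ∩ C ∩ B) : ℝ) ≤ #B := by exact_mod_cast card_le_card inter_subset_right
  rw [hempty, card_empty, Nat.cast_zero, add_zero] at hcut
  have hδC : (0 : ℝ) ≤ δ * #C := le_trans (by positivity) hB
  have hδC' : δ * #C ≤ 1 / 5 * #C := mul_le_mul_of_nonneg_right hδ (by positivity)
  have hfactor : 0 ≤ 3 * (#(D ∩ C) : ℝ) - 4 * (δ * #C) - 3 * #(D ∩ C ∩ B) := by linarith
  nlinarith [mul_le_mul_of_nonneg_left hgood hδC,
    mul_nonneg (Nat.cast_nonneg (α := ℝ) #(C \ D)) hfactor]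

theorem IsClustering.card_negCut_le_of_disjoint (hGB : G.GoodBadStructure B) (hδ : δ ≤ 1 / 5)
    (hclean : G.deltaClean δ B C) (hBC : B ⊆ C) (hB : (#B : ℝ) ≤ δ * #C)
    (hpm : #(G.Eminus B (C \ B)) ≤ #(G.Eplus B (C \ B))) (hP : IsClustering P) (hD : D ∈ P)
    (hbig : (#C : ℝ) / 2 < #(D ∩ C)) (hBD : Disjoint B D) :
    (#(G.negCut P C) : ℝ) ≤ 3 * #(G.Eplus (C \ D) (D ∩ C)) := by
  set U := (C \ D) \ B
  have hcut := hP.card_negCut_le hGB hclean hD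
  rw [sdiff_eq_self_of_disjoint hBD] at hcut
  have hsplit : C \ B ⊆ U ∪ D ∩ C := fun v hv => by
    by_cases hvD : v ∈ D <;> simp_all [U]
  have hEplus : #(G.Eplus B (C \ B)) ≤ #B * #U + #(G.Eplus B (D ∩ C)) :=
    (card_le_card (Eplus_subset_union hsplit)).trans <|
      (card_union_le _ _).trans (Nat.add_le_add_right (G.card_Eplus_le_card_mul_card B U) _)
  have hBW : Disjoint B (D ∩ C) := hBD.mono_right inter_subset_left
  have hdisj : Disjoint (C \ D) (D ∩ C) := inter_comm C D ▸ disjoint_sdiff_inter C D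
  have hBCD : B ⊆ C \ D := subset_sdiff.mpr ⟨hBC, hBD⟩
  have hsum : (#(G.Eplus (C \ D) (D ∩ C)) : ℝ) =
      ∑ x ∈ U, (#(G.posNbr x ∩ (D ∩ C)) : ℝ) + #(G.Eplus B (D ∩ C)) := by
    rw [G.card_Eplus_eq_sum hdisj, G.card_Eplus_eq_sum hBW, ← sum_sdiff hBCD]
    push_cast
    rfl
  have hpos := hclean.card_mul_le_sum_card_posNbr_inter hGB
    (sdiff_subset_sdiff sdiff_subset subset_rfl) inter_subset_right
    (hdisj.mono_left sdiff_subset)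
  have hWB : D ∩ C ∩ B = ∅ := disjoint_iff_inter_eq_empty.mp hBW.symm
  rw [hWB, card_empty, Nat.cast_zero, sub_zero] at hpos
  have hδC' : δ * #C ≤ 1 / 5 * #C := mul_le_mul_of_nonneg_right hδ (by positivity)
  have hfactor : 0 ≤ 3 * (#(D ∩ C) : ℝ) - 4 * (δ * #C) - #B := by linarith
  have hpm' : (#(G.Eminus B (C \ B)) : ℝ) ≤ #B * #U + #(G.Eplus B (D ∩ C)) := by
    exact_mod_cast hpm.trans hEplus
  nlinarith [mul_nonneg (Nat.cast_nonneg (α := ℝ) #U) hfactor]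

theorem IsClustering.card_negCut_le_of_lt_card_inter (hGB : G.GoodBadStructure B)
    (hδ : δ ≤ 1 / 5) (hclean : G.deltaClean δ B C) (hBC : B ⊆ C)
    (hB : (#B : ℝ) ≤ δ * #C) (hpm : #(G.Eminus B (C \ B)) ≤ #(G.Eplus B (C \ B)))
    (hP : IsClustering P) {D₀ : Finset V} (hD₀ : D₀ ∈ P) (hBD₀ : B ⊆ D₀)
    (hD : D ∈ P) (hbig : (#C : ℝ) / 2 < #(D ∩ C)) :
    (#(G.negCut P C) : ℝ) ≤ 3 * #(G.Eplus (C \ D) (D ∩ C)) := by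
  by_cases hBD : B ⊆ D
  · exact hP.card_negCut_le_of_subset hGB hδ hclean hB hD hbig hBD
  obtain ⟨b, hb, hbD⟩ := not_subset.mp hBD
  have hD₀D : D₀ ≠ D := fun h => hbD (h ▸ hBD₀ hb)
  exact hP.card_negCut_le_of_disjoint hGB hδ hclean hBC hB hpm hD hbig
    ((hP.2.1 D₀ hD₀ D hD hD₀D).mono_left hBD₀)

end SignedGraph

/-- If `C ⊇ B` is `δ`-clean with `0 < δ ≤ 1/5`,
`|C| > (1/δ)·|B|` and `|E⁺(B, C \ B)| ≥ |E⁻(B, C \ B)|`, then the number of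
negative edges with both endpoints in `C` is at most `3·m(OPT_B)`. -/
theorem stmt1 {V : Type*} [Fintype V] [DecidableEq V] (G : SignedGraph V)
    (B : Finset V) (hGB : G.GoodBadStructure B)
    (δ : ℝ) (hδ0 : 0 < δ) (hδ5 : δ ≤ 1 / 5)
    (C : Finset V) (hBC : B ⊆ C) (hclean : G.deltaClean δ B C)
    (hsize : (1 / δ) * (B.card : ℝ) < (C.card : ℝ))
    (hpm : (G.Eminus B (C \ B)).card ≤ (G.Eplus B (C \ B)).card) :
    ((G.neg.filter (fun e => ∀ x ∈ e, x ∈ C)).card : ℝ) ≤ 3 * G.mOptB B := by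
  have hB : (#B : ℝ) < δ * #C := by
    rwa [one_div_mul_eq_div, div_lt_iff₀ hδ0, mul_comm] at hsize
  have hC : 0 < #C :=
    Nat.cast_pos.mp (pos_of_mul_pos_right ((Nat.cast_nonneg _).trans_lt hB) hδ0.le)
  obtain ⟨v, -⟩ := card_pos.mp hC
  have : Nonempty V := ⟨v⟩
  obtain ⟨P, hP, ⟨D₀, hD₀, hBD₀⟩, hmP⟩ := G.exists_isClustering_mistakes_eq_mOptB B
  simp only [← mem_sym2_iff, ← hmP]
  suffices ∃ Pc ⊆ {e ∈ G.pos | ¬ SignedGraph.InCluster P e},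
      (#(G.negCut P C) : ℝ) ≤ 3 * #Pc by
    obtain ⟨Pc, hPc, hcut⟩ := this
    exact_mod_cast G.card_le_three_mul_mistakes hPc (by exact_mod_cast hcut)
  by_cases hbig : ∃ D ∈ P, (#C : ℝ) / 2 < #(D ∩ C)
  · obtain ⟨D, hD, hbig⟩ := hbig
    exact ⟨_, hP.Eplus_subset hD, hP.card_negCut_le_of_lt_card_inter hGB hδ5 hclean hBC
      hB.le hpm hD₀ hBD₀ hD hbig⟩
  · push Not at hbig
    exact ⟨_, monotone_filter_right _ fun _ _ => And.right,
      hP.card_negCut_le_of_forall_card_inter_le hGB hδ5 hclean hBC hB.le hbig⟩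
end

section
/- Let δ > 0 and let C ⊆ V be a δ-clean set with B ⊆ C. If |N⁺(B)| > 2|B|² + (2/δ)·|B|, then |C| > (2/δ)·|B|. -/
open scoped Classical

/-- If `C ⊇ B` is `δ`-clean and `|N⁺(B)| > 2|B|² + (2/δ)·|B|`,
then `|C| > (2/δ)·|B|`. -/
theorem stmt5 {V : Type*} [Fintype V] [DecidableEq V] (G : SignedGraph V)
    (B : Finset V) (hGB : G.GoodBadStructure B)
    (δ : ℝ) (hδ0 : 0 < δ)
    (C : Finset V) (hBC : B ⊆ C) (hclean : G.deltaClean δ B C)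
    (hN : 2 * (B.card : ℝ) ^ 2 + (2 / δ) * (B.card : ℝ) < ((G.posNbrSet B).card : ℝ)) :
    (2 / δ) * (B.card : ℝ) < (C.card : ℝ) := by
  classical
  -- Each vertex of N⁺(B) \ C gives a distinct edge of E⁺(B, Cᶜ)
  have key : ((G.posNbrSet B) \ C).card ≤ (G.Eplus B Cᶜ).card := by
    have hch : ∀ v ∈ (G.posNbrSet B) \ C, ∃ u ∈ B, G.posAdj v u := by
      intro v hv
      have := Finset.mem_sdiff.mp hv
      have := (Finset.mem_filter.mp this.1).2
      exact this.2
    choose! u hu hadj using hch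
    apply Finset.card_le_card_of_injOn (fun v => s(v, u v))
    · intro v hv
      have hvC : v ∉ C := (Finset.mem_sdiff.mp hv).2
      refine Finset.mem_filter.mpr ⟨hadj v hv, u v, hu v hv, v, ?_, ?_⟩
      · simpa using hvC
      · exact Sym2.eq_swap
    · intro v hv w hw heq
      have hvC : v ∉ C := (Finset.mem_sdiff.mp hv).2
      have huwC : u w ∈ C := hBC (hu w hw)
      simp only [Sym2.eq, Sym2.rel_iff', Prod.mk.injEq, Prod.swap_prod_mk] at heq
      rcases heq with ⟨h1, _⟩ | ⟨h1, h2⟩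
      · exact h1
      · exact absurd (h1 ▸ huwC) hvC
  -- card bound
  have hsplit : (G.posNbrSet B).card ≤ C.card + ((G.posNbrSet B) \ C).card := by
    have : G.posNbrSet B ⊆ C ∪ ((G.posNbrSet B) \ C) := by
      intro v hv
      by_cases h : v ∈ C
      · exact Finset.mem_union_left _ h
      · exact Finset.mem_union_right _ (Finset.mem_sdiff.mpr ⟨hv, h⟩)
    calc (G.posNbrSet B).card ≤ (C ∪ ((G.posNbrSet B) \ C)).card :=
          Finset.card_le_card this
      _ ≤ _ := Finset.card_union_le _ _
  have hEB : ((G.Eplus B Cᶜ).card : ℝ) ≤ δ * B.card * C.card :=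
    (hclean.2 hBC).2
  have h1 : ((G.posNbrSet B).card : ℝ) ≤ C.card + δ * B.card * C.card := by
    have := le_trans hsplit (Nat.add_le_add_left key _)
    have h' : ((G.posNbrSet B).card : ℝ) ≤ (C.card : ℝ) + ((G.Eplus B Cᶜ).card : ℝ) := by
      exact_mod_cast this
    linarith
  by_contra hcon
  push_neg at hcon
  have hb0 : (0 : ℝ) ≤ (B.card : ℝ) := Nat.cast_nonneg _
  have hde : δ * (2 / δ) = 2 := by field_simp
  have h2 : δ * (B.card : ℝ) * (C.card : ℝ) ≤ δ * (B.card : ℝ) * ((2 / δ) * B.card) :=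
    mul_le_mul_of_nonneg_left hcon (mul_nonneg hδ0.le hb0)
  nlinarith [h1, hN, h2, hde, hcon]
end

section
/- Set δ = 1/65. Let 𝒪 be a clustering of V in which B is contained in a single cluster C_B and every cluster of size at least two that contains at least one good vertex is δ-clean, and suppose |C_B| > (2/δ)·|B|. Then for every x ∈ N⁺(B) ∩ C_B and every valid cleaning run from x with result A: (i) B is 3δ-good w.r.t. A and x is 3δ-good w.r.t. A (so the run's output is A ⊇ B ∪ {x}); (ii) |A| > (1/δ)·|B|; (iii) C(A) is 13δ-clean; (iv) C_B ⊆ C(A); and (v) C(A) ∩ C′ = ∅ for every cluster C′ of 𝒪 other than C_B that has size at least two and contains only good vertices. -/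
open scoped Classical

namespace SignedGraph

variable {V : Type*} [Fintype V] [DecidableEq V]

/-- A valid cleaning run from the good vertex `x` with result `A`: a strictly
decreasing sequence starting at `N⁺[x] ∪ B`, at each step deleting one good
vertex `v ≠ x` that is `3δ`-bad w.r.t. the current set, and ending in a set
whose good vertices other than `x` are all `3δ`-good w.r.t. it. -/
def ValidCleaningRun (G : SignedGraph V) (δ : ℝ) (B : Finset V) (x : V)
    (A : Finset V) : Prop :=
  ∃ (m : ℕ) (f : ℕ → Finset V),
    f 0 = G.posNbrCl x ∪ B ∧
    (∀ i < m, ∃ v ∈ f i, v ≠ x ∧ v ∉ B ∧ ¬ G.deltaGood (3 * δ) v (f i) ∧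
      f (i + 1) = (f i).erase v) ∧
    (∀ v ∈ f m, v ≠ x → v ∉ B → G.deltaGood (3 * δ) v (f m)) ∧
    A = f m

/-- `V′(A) = {v : |N⁺(v) ∩ A| ≥ (1−9δ)|A| and |N⁺(v) \ A| ≤ 9δ|A|}`. -/
noncomputable def Vprime (G : SignedGraph V) (δ : ℝ) (A : Finset V) : Finset V :=
  Finset.univ.filter (fun v =>
    (1 - 9 * δ) * (A.card : ℝ) ≤ ((G.posNbr v ∩ A).card : ℝ) ∧
    ((G.posNbr v \ A).card : ℝ) ≤ 9 * δ * (A.card : ℝ))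

/-- `C(A) = A ∪ V′(A)`. -/
noncomputable def bigC (G : SignedGraph V) (δ : ℝ) (A : Finset V) : Finset V :=
  A ∪ G.Vprime δ A

end SignedGraph

namespace SignedGraph

variable {V : Type*} [Fintype V] [DecidableEq V] (G : SignedGraph V)

lemma posAdj_symm {u v : V} : G.posAdj u v ↔ G.posAdj v u := by
  unfold posAdj; rw [Sym2.eq_swap]

lemma negAdj_symm_s6 {u v : V} : G.negAdj u v ↔ G.negAdj v u := by
  unfold negAdj; rw [Sym2.eq_swap]

lemma mem_posNbr {u v : V} : u ∈ G.posNbr v ↔ G.posAdj v u := by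
  simp [posNbr]

lemma mem_negNbr {u v : V} : u ∈ G.negNbr v ↔ G.negAdj v u := by
  simp [negNbr]

lemma not_pos_and_neg {u v : V} (h : G.posAdj u v) : ¬ G.negAdj u v := by
  intro h'; exact (Finset.disjoint_left.mp G.disjoint_pos_neg h) h'

lemma posAdj_ne {u v : V} (h : G.posAdj u v) : u ≠ v := by
  intro he; subst he
  exact G.pos_not_diag _ h (Sym2.mk_isDiag_iff.mpr rfl)

lemma card_Eminus_le (X Y : Finset V) :
    (G.Eminus X Y).card ≤ X.card * Y.card := by
  have h : G.Eminus X Y ⊆ (X ×ˢ Y).image (fun p => s(p.1, p.2)) := by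
    intro e he
    rw [Eminus, Finset.mem_filter] at he
    obtain ⟨u, hu, v, hv, rfl⟩ := he.2
    exact Finset.mem_image.mpr ⟨(u, v), Finset.mem_product.mpr ⟨hu, hv⟩, rfl⟩
  calc (G.Eminus X Y).card ≤ _ := Finset.card_le_card h
    _ ≤ (X ×ˢ Y).card := Finset.card_image_le
    _ = X.card * Y.card := Finset.card_product X Y

lemma card_Eplus_le (X Y : Finset V) :
    (G.Eplus X Y).card ≤ X.card * Y.card := by
  have h : G.Eplus X Y ⊆ (X ×ˢ Y).image (fun p => s(p.1, p.2)) := by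
    intro e he
    rw [Eplus, Finset.mem_filter] at he
    obtain ⟨u, hu, v, hv, rfl⟩ := he.2
    exact Finset.mem_image.mpr ⟨(u, v), Finset.mem_product.mpr ⟨hu, hv⟩, rfl⟩
  calc (G.Eplus X Y).card ≤ _ := Finset.card_le_card h
    _ ≤ (X ×ˢ Y).card := Finset.card_image_le
    _ = X.card * Y.card := Finset.card_product X Y

lemma Eminus_mono (X : Finset V) {Y Z : Finset V} (h : Y ⊆ Z) :
    G.Eminus X Y ⊆ G.Eminus X Z := by
  intro e he
  rw [Eminus, Finset.mem_filter] at he ⊢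
  obtain ⟨h1, u, hu, v, hv, rfl⟩ := he
  exact ⟨h1, u, hu, v, h hv, rfl⟩

lemma Eplus_mono (X : Finset V) {Y Z : Finset V} (h : Y ⊆ Z) :
    G.Eplus X Y ⊆ G.Eplus X Z := by
  intro e he
  rw [Eplus, Finset.mem_filter] at he ⊢
  obtain ⟨h1, u, hu, v, hv, rfl⟩ := he
  exact ⟨h1, u, hu, v, h hv, rfl⟩

lemma Eminus_union_subset (X Y Z : Finset V) :
    G.Eminus X (Y ∪ Z) ⊆ G.Eminus X Y ∪ G.Eminus X Z := by
  intro e he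
  rw [Eminus, Finset.mem_filter] at he
  obtain ⟨h1, u, hu, v, hv, rfl⟩ := he
  rcases Finset.mem_union.mp hv with hv | hv
  · exact Finset.mem_union_left _ (Finset.mem_filter.mpr ⟨h1, u, hu, v, hv, rfl⟩)
  · exact Finset.mem_union_right _ (Finset.mem_filter.mpr ⟨h1, u, hu, v, hv, rfl⟩)

lemma Eplus_union_subset (X Y Z : Finset V) :
    G.Eplus X (Y ∪ Z) ⊆ G.Eplus X Y ∪ G.Eplus X Z := by
  intro e he
  rw [Eplus, Finset.mem_filter] at he
  obtain ⟨h1, u, hu, v, hv, rfl⟩ := he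
  rcases Finset.mem_union.mp hv with hv | hv
  · exact Finset.mem_union_left _ (Finset.mem_filter.mpr ⟨h1, u, hu, v, hv, rfl⟩)
  · exact Finset.mem_union_right _ (Finset.mem_filter.mpr ⟨h1, u, hu, v, hv, rfl⟩)

lemma posNbr_inter_eq (v : V) (X : Finset V) :
    G.posNbr v ∩ X = X.filter (fun u => G.posAdj v u) := by
  ext u; simp [mem_posNbr, and_comm]

lemma sum_posNbr_comm (W X : Finset V) :
    ∑ v ∈ W, (G.posNbr v ∩ X).card = ∑ u ∈ X, (G.posNbr u ∩ W).card := by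
  simp only [posNbr_inter_eq, Finset.card_filter]
  rw [Finset.sum_comm]
  apply Finset.sum_congr rfl
  intro u _
  apply Finset.sum_congr rfl
  intro v _
  simp only [G.posAdj_symm (u := v) (v := u)]

end SignedGraph

set_option maxHeartbeats 4000000 in
/-- Lemma on the existence of x: for `δ = 1/65`, a clustering in
which `B` lies in a single cluster `C_B` with `|C_B| > (2/δ)|B|` and all
clusters of size ≥ 2 containing a good vertex `δ`-clean, every
`x ∈ N⁺(B) ∩ C_B` and every valid cleaning run from `x` with result `A`
satisfy: `B` and `x` are `3δ`-good w.r.t. `A` (so `A ⊇ B ∪ {x}`),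
`|A| > (1/δ)|B|`, `C(A)` is `13δ`-clean, `C_B ⊆ C(A)`, and `C(A)` is disjoint
from every other cluster of size ≥ 2 containing only good vertices. -/
theorem stmt6 {V : Type*} [Fintype V] [DecidableEq V] (G : SignedGraph V)
    (B : Finset V) (hGB : G.GoodBadStructure B)
    (δ : ℝ) (hδ : δ = 1 / 65)
    (P : Finset (Finset V)) (hP : SignedGraph.IsClustering P)
    (CB : Finset V) (hCBP : CB ∈ P) (hBCB : B ⊆ CB)
    (hclean : ∀ C ∈ P, 2 ≤ C.card → (∃ v ∈ C, v ∉ B) → G.deltaClean δ B C)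
    (hsize : (2 / δ) * (B.card : ℝ) < (CB.card : ℝ))
    (x : V) (hx : x ∈ G.posNbrSet B ∩ CB)
    (A : Finset V) (hA : G.ValidCleaningRun δ B x A) :
    (G.deltaGoodB (3 * δ) B A ∧ G.deltaGood (3 * δ) x A ∧ B ∪ {x} ⊆ A) ∧
    (1 / δ) * (B.card : ℝ) < (A.card : ℝ) ∧
    G.deltaClean (13 * δ) B (G.bigC δ A) ∧
    CB ⊆ G.bigC δ A ∧
    (∀ C' ∈ P, C' ≠ CB → 2 ≤ C'.card → (∀ v ∈ C', v ∉ B) →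
      Disjoint (G.bigC δ A) C') := by
  classical
  subst hδ
  -- generic cast helpers
  have cardle : ∀ {s t : Finset V}, s ⊆ t → ((s.card : ℝ) ≤ t.card) := by
    intro s t h; exact_mod_cast Finset.card_le_card h
  have cardsub2 : ∀ {s t u : Finset V}, s ⊆ t ∪ u →
      ((s.card : ℝ) ≤ (t.card : ℝ) + u.card) := by
    intro s t u h
    calc ((s.card : ℝ)) ≤ ((t ∪ u).card : ℝ) := cardle h
      _ ≤ (t.card : ℝ) + u.card := by exact_mod_cast Finset.card_union_le t u
  obtain ⟨m, f, hf0, hstep, hfinal, hAm⟩ := hA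
  rw [Finset.mem_inter] at hx
  obtain ⟨hxN, hxCB⟩ := hx
  rw [SignedGraph.posNbrSet, Finset.mem_filter] at hxN
  obtain ⟨-, hxB, u0, hu0B, hxu0⟩ := hxN
  have hBne : B.Nonempty := ⟨u0, hu0B⟩
  have hB1 : (1 : ℝ) ≤ B.card := by exact_mod_cast Finset.card_pos.mpr hBne
  have hCB130 : (130 : ℝ) * B.card < CB.card := by
    norm_num at hsize; linarith
  have hCB2 : 2 ≤ CB.card := by
    have : (2 : ℝ) ≤ (CB.card : ℝ) := by linarith
    exact_mod_cast this
  have hCBclean := hclean CB hCBP hCB2 ⟨x, hxCB, hxB⟩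
  have hgoodCB : ∀ v ∈ CB, v ∉ B → G.deltaGood (1/65) v CB := hCBclean.1
  have hBgoodCB := hCBclean.2 hBCB
  set A0 : Finset V := G.posNbrCl x ∪ B with hA0def
  have hxA0 : x ∈ A0 := Finset.mem_union_left _ (Finset.mem_insert_self _ _)
  have hBA0 : B ⊆ A0 := Finset.subset_union_right
  have hxgCB := hgoodCB x hxCB hxB
  have hA0diff : ((A0 \ CB).card : ℝ) ≤ (1/65) * CB.card := by
    have hsub : A0 \ CB ⊆ G.posNbr x \ CB := by
      intro u hu
      rw [Finset.mem_sdiff] at hu ⊢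
      refine ⟨?_, hu.2⟩
      rcases Finset.mem_union.mp hu.1 with h | h
      · rcases Finset.mem_insert.mp h with rfl | h
        · exact absurd hxCB hu.2
        · exact h
      · exact absurd (hBCB h) hu.2
    exact le_trans (cardle hsub) hxgCB.2
  have hCBdiff : ((CB \ A0).card : ℝ) ≤ (1/65) * CB.card := by
    have hsub : CB \ A0 ⊆ G.negNbr x ∩ CB := by
      intro u hu
      rw [Finset.mem_sdiff] at hu
      have huB : u ∉ B := fun h => hu.2 (hBA0 h)
      have hux : x ≠ u := by rintro rfl; exact hu.2 hxA0
      rcases hGB.1 x u hxB huB hux with h | h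
      · exact absurd (Finset.mem_union_left _
          (Finset.mem_insert_of_mem ((G.mem_posNbr).mpr h))) hu.2
      · exact Finset.mem_inter.mpr ⟨(G.mem_negNbr).mpr h, hu.1⟩
    exact le_trans (cardle hsub) hxgCB.1
  -- facts about any intermediate set S of the cleaning run
  have hSfacts : ∀ S : Finset V, S ⊆ A0 → CB ∩ A0 ⊆ S →
      ((S \ CB).card : ℝ) ≤ (1/65) * CB.card ∧
      ((CB \ S).card : ℝ) ≤ (1/65) * CB.card ∧
      (64/65) * (CB.card : ℝ) ≤ (S.card : ℝ) ∧
      (S.card : ℝ) ≤ (66/65) * CB.card := by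
    intro S hSA0 hKS
    have h1 : ((S \ CB).card : ℝ) ≤ (1/65) * CB.card :=
      le_trans (cardle (Finset.sdiff_subset_sdiff hSA0 le_rfl)) hA0diff
    have h2sub : CB \ S ⊆ CB \ A0 := by
      intro u hu; rw [Finset.mem_sdiff] at hu ⊢
      exact ⟨hu.1, fun h => hu.2 (hKS (Finset.mem_inter.mpr ⟨hu.1, h⟩))⟩
    have h2 : ((CB \ S).card : ℝ) ≤ (1/65) * CB.card :=
      le_trans (cardle h2sub) hCBdiff
    have e1 : (CB ∩ S).card + (CB \ S).card = CB.card :=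
      Finset.card_inter_add_card_sdiff CB S
    have e2 : (S ∩ CB).card + (S \ CB).card = S.card :=
      Finset.card_inter_add_card_sdiff S CB
    have l1 : ((CB ∩ S).card : ℝ) ≤ S.card := cardle Finset.inter_subset_right
    have l2 : ((S ∩ CB).card : ℝ) ≤ CB.card := cardle Finset.inter_subset_right
    have e1' : ((CB ∩ S).card : ℝ) + ((CB \ S).card : ℝ) = CB.card := by
      exact_mod_cast e1
    have e2' : ((S ∩ CB).card : ℝ) + ((S \ CB).card : ℝ) = S.card := by
      exact_mod_cast e2
    exact ⟨h1, h2, by linarith, by linarith⟩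
  -- a good vertex of CB is 3δ-good w.r.t. any such S
  have hGoodKey : ∀ S : Finset V, S ⊆ A0 → CB ∩ A0 ⊆ S →
      ∀ v ∈ CB, v ∉ B → G.deltaGood (3 * (1/65)) v S := by
    intro S hSA0 hKS v hvCB hvB
    obtain ⟨hS1, hS2, hS3, hS4⟩ := hSfacts S hSA0 hKS
    have hvg := hgoodCB v hvCB hvB
    constructor
    · have hsub : G.negNbr v ∩ S ⊆ (G.negNbr v ∩ CB) ∪ (S \ CB) := by
        intro u hu
        rw [Finset.mem_inter] at hu
        by_cases h : u ∈ CB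
        · exact Finset.mem_union_left _ (Finset.mem_inter.mpr ⟨hu.1, h⟩)
        · exact Finset.mem_union_right _ (Finset.mem_sdiff.mpr ⟨hu.2, h⟩)
      have := cardsub2 hsub
      have := hvg.1
      linarith
    · have hsub : G.posNbr v \ S ⊆ (G.posNbr v \ CB) ∪ (CB \ S) := by
        intro u hu
        rw [Finset.mem_sdiff] at hu
        by_cases h : u ∈ CB
        · exact Finset.mem_union_right _ (Finset.mem_sdiff.mpr ⟨h, hu.2⟩)
        · exact Finset.mem_union_left _ (Finset.mem_sdiff.mpr ⟨hu.1, h⟩)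
      have := cardsub2 hsub
      have := hvg.2
      linarith
  -- the invariant of the cleaning run
  have hinv : ∀ i, i ≤ m → f i ⊆ A0 ∧ CB ∩ A0 ⊆ f i := by
    intro i
    induction i with
    | zero => intro _; rw [hf0]; exact ⟨subset_rfl, Finset.inter_subset_right⟩
    | succ n ih =>
      intro hn
      have hn' : n < m := hn
      obtain ⟨hfA0, hKf⟩ := ih (le_of_lt hn')
      obtain ⟨v, hvf, hvx, hvB, hvbad, hfeq⟩ := hstep n hn'
      have hvCB : v ∉ CB := fun hvCB =>
        hvbad (hGoodKey (f n) hfA0 hKf v hvCB hvB)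
      rw [hfeq]
      refine ⟨(Finset.erase_subset _ _).trans hfA0, ?_⟩
      intro u hu
      rw [Finset.mem_erase]
      exact ⟨fun he => hvCB (he ▸ (Finset.mem_inter.mp hu).1), hKf hu⟩
  have hAinv := hAm ▸ hinv m le_rfl
  obtain ⟨hAA0, hKA⟩ := hAinv
  obtain ⟨hAd1, hAd2, hAlow, hAhigh⟩ := hSfacts A hAA0 hKA
  have hxA : x ∈ A := hKA (Finset.mem_inter.mpr ⟨hxCB, hxA0⟩)
  have hBA : B ⊆ A := fun b hb => hKA (Finset.mem_inter.mpr ⟨hBCB hb, hBA0 hb⟩)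
  have hxgoodA : G.deltaGood (3 * (1/65)) x A := hGoodKey A hAA0 hKA x hxCB hxB
  have hAgood : ∀ v ∈ A, v ∉ B → G.deltaGood (3 * (1/65)) v A := by
    intro v hv hvB
    by_cases hvx : v = x
    · exact hvx ▸ hxgoodA
    · exact hAm ▸ hfinal v (hAm ▸ hv) hvx hvB
  -- part (i): B is 3δ-good w.r.t. A
  have hBgoodA : G.deltaGoodB (3 * (1/65)) B A := by
    constructor
    · have hsub : G.Eminus B (A \ B) ⊆ G.Eminus B (CB \ B) ∪ G.Eminus B (A \ CB) := by
        refine Finset.Subset.trans (G.Eminus_mono B ?_) (G.Eminus_union_subset B _ _)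
        intro u hu
        rw [Finset.mem_sdiff] at hu
        by_cases h : u ∈ CB
        · exact Finset.mem_union_left _ (Finset.mem_sdiff.mpr ⟨h, hu.2⟩)
        · exact Finset.mem_union_right _ (Finset.mem_sdiff.mpr ⟨hu.1, h⟩)
      have h1 : ((G.Eminus B (A \ B)).card : ℝ) ≤
          ((G.Eminus B (CB \ B)).card : ℝ) + (G.Eminus B (A \ CB)).card := by
        calc ((G.Eminus B (A \ B)).card : ℝ)
            ≤ ((G.Eminus B (CB \ B) ∪ G.Eminus B (A \ CB)).card : ℝ) := by
              exact_mod_cast Finset.card_le_card hsub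
          _ ≤ _ := by exact_mod_cast Finset.card_union_le _ _
      have h2 : ((G.Eminus B (A \ CB)).card : ℝ) ≤ (B.card : ℝ) * (A \ CB).card := by
        exact_mod_cast G.card_Eminus_le B (A \ CB)
      have h3 := hBgoodCB.1
      have h4 : (B.card : ℝ) * ((A \ CB).card : ℝ) ≤ (B.card : ℝ) * ((1/65) * CB.card) :=
        mul_le_mul_of_nonneg_left hAd1 (by positivity)
      have h5 : (2/65 : ℝ) * B.card * CB.card ≤ (3 * (1/65)) * B.card * A.card := by
        nlinarith [mul_le_mul_of_nonneg_left hAlow (show (0:ℝ) ≤ (B.card:ℝ) by linarith)]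
      linarith
    · have hsub : G.Eplus B Aᶜ ⊆ G.Eplus B CBᶜ ∪ G.Eplus B (CB \ A) := by
        refine Finset.Subset.trans (G.Eplus_mono B ?_) (G.Eplus_union_subset B _ _)
        intro u hu
        rw [Finset.mem_compl] at hu
        by_cases h : u ∈ CB
        · exact Finset.mem_union_right _ (Finset.mem_sdiff.mpr ⟨h, hu⟩)
        · exact Finset.mem_union_left _ (Finset.mem_compl.mpr h)
      have h1 : ((G.Eplus B Aᶜ).card : ℝ) ≤
          ((G.Eplus B CBᶜ).card : ℝ) + (G.Eplus B (CB \ A)).card := by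
        calc ((G.Eplus B Aᶜ).card : ℝ)
            ≤ ((G.Eplus B CBᶜ ∪ G.Eplus B (CB \ A)).card : ℝ) := by
              exact_mod_cast Finset.card_le_card hsub
          _ ≤ _ := by exact_mod_cast Finset.card_union_le _ _
      have h2 : ((G.Eplus B (CB \ A)).card : ℝ) ≤ (B.card : ℝ) * (CB \ A).card := by
        exact_mod_cast G.card_Eplus_le B (CB \ A)
      have h3 := hBgoodCB.2
      have h4 : (B.card : ℝ) * ((CB \ A).card : ℝ) ≤ (B.card : ℝ) * ((1/65) * CB.card) :=
        mul_le_mul_of_nonneg_left hAd2 (by positivity)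
      have h5 : (2/65 : ℝ) * B.card * CB.card ≤ (3 * (1/65)) * B.card * A.card := by
        nlinarith [mul_le_mul_of_nonneg_left hAlow (show (0:ℝ) ≤ (B.card:ℝ) by linarith)]
      linarith
  -- part (ii)
  have hii : (1 / (1/65 : ℝ)) * (B.card : ℝ) < (A.card : ℝ) := by
    norm_num
    linarith
  have hBA65 : (65 : ℝ) * B.card < A.card := by norm_num at hii; linarith
  have hApos : (0 : ℝ) < A.card := by linarith
  -- bound on W = V'(A) \ A
  have hmemVp : ∀ v : V, v ∈ G.Vprime (1/65) A ↔
      (1 - 9 * (1/65)) * (A.card : ℝ) ≤ ((G.posNbr v ∩ A).card : ℝ) ∧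
      ((G.posNbr v \ A).card : ℝ) ≤ 9 * (1/65) * (A.card : ℝ) := by
    intro v; simp [SignedGraph.Vprime]
  set W : Finset V := G.Vprime (1/65) A \ A with hWdef
  have hWA : ∀ v ∈ W, v ∉ A := fun v hv => (Finset.mem_sdiff.mp hv).2
  have hWcard : (W.card : ℝ) ≤ (4/65) * A.card := by
    have hsum1 : ∑ v ∈ W, (G.posNbr v ∩ (A \ B)).card
        = ∑ u ∈ A \ B, (G.posNbr u ∩ W).card := G.sum_posNbr_comm W (A \ B)
    have hsum2 : (∑ u ∈ A \ B, ((G.posNbr u ∩ W).card : ℝ))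
        ≤ (A.card : ℝ) * ((3 * (1/65)) * A.card) := by
      have hterm : ∀ u ∈ A \ B, ((G.posNbr u ∩ W).card : ℝ) ≤ (3 * (1/65)) * A.card := by
        intro u hu
        rw [Finset.mem_sdiff] at hu
        have h1 : G.posNbr u ∩ W ⊆ G.posNbr u \ A := by
          intro w hw
          rw [Finset.mem_inter] at hw
          exact Finset.mem_sdiff.mpr ⟨hw.1, hWA w hw.2⟩
        exact le_trans (cardle h1) ((hAgood u hu.1 hu.2).2)
      calc (∑ u ∈ A \ B, ((G.posNbr u ∩ W).card : ℝ))
          ≤ ((A \ B).card : ℝ) * ((3 * (1/65)) * A.card) := by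
            have := Finset.sum_le_card_nsmul (A \ B)
              (fun u => ((G.posNbr u ∩ W).card : ℝ)) ((3 * (1/65)) * A.card) hterm
            rwa [nsmul_eq_mul] at this
        _ ≤ (A.card : ℝ) * ((3 * (1/65)) * A.card) := by
            have : ((A \ B).card : ℝ) ≤ A.card := cardle (Finset.sdiff_subset)
            nlinarith [hApos]
    have hsum3 : (W.card : ℝ) * ((55/65) * A.card)
        ≤ ∑ v ∈ W, ((G.posNbr v ∩ (A \ B)).card : ℝ) := by
      have hterm : ∀ v ∈ W, (55/65 : ℝ) * A.card ≤ ((G.posNbr v ∩ (A \ B)).card : ℝ) := by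
        intro v hv
        obtain ⟨hvVp, hvA⟩ := Finset.mem_sdiff.mp hv
        have h1 := ((hmemVp v).mp hvVp).1
        have h2 : G.posNbr v ∩ A ⊆ (G.posNbr v ∩ (A \ B)) ∪ B := by
          intro w hw
          rw [Finset.mem_inter] at hw
          by_cases hwB : w ∈ B
          · exact Finset.mem_union_right _ hwB
          · exact Finset.mem_union_left _
              (Finset.mem_inter.mpr ⟨hw.1, Finset.mem_sdiff.mpr ⟨hw.2, hwB⟩⟩)
        have := cardsub2 h2
        linarith
      have := Finset.card_nsmul_le_sum W
        (fun v => ((G.posNbr v ∩ (A \ B)).card : ℝ)) ((55/65 : ℝ) * A.card) hterm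
      rwa [nsmul_eq_mul] at this
    have hsumeq : (∑ v ∈ W, ((G.posNbr v ∩ (A \ B)).card : ℝ))
        = ∑ u ∈ A \ B, ((G.posNbr u ∩ W).card : ℝ) := by exact_mod_cast hsum1
    have hkey : (W.card : ℝ) * ((55/65) * A.card) ≤ (A.card : ℝ) * ((3 * (1/65)) * A.card) := by
      linarith
    nlinarith [hApos, hkey]
  -- bigC facts
  have hbigC : G.bigC (1/65) A = A ∪ G.Vprime (1/65) A := rfl
  have hAbigC : A ⊆ G.bigC (1/65) A := Finset.subset_union_left
  have hbigCsub : G.bigC (1/65) A ⊆ A ∪ W := by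
    intro v hv
    rcases Finset.mem_union.mp hv with h | h
    · exact Finset.mem_union_left _ h
    · by_cases hvA : v ∈ A
      · exact Finset.mem_union_left _ hvA
      · exact Finset.mem_union_right _ (Finset.mem_sdiff.mpr ⟨h, hvA⟩)
  have hCAlow : (A.card : ℝ) ≤ ((G.bigC (1/65) A).card : ℝ) := cardle hAbigC
  have hCAhigh : ((G.bigC (1/65) A).card : ℝ) ≤ (A.card : ℝ) + (4/65) * A.card := by
    have := cardsub2 hbigCsub
    linarith
  have hCAdiff : G.bigC (1/65) A \ A ⊆ W := by
    intro v hv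
    rw [Finset.mem_sdiff] at hv
    rcases Finset.mem_union.mp (hbigCsub hv.1) with h | h
    · exact absurd h hv.2
    · exact h
  have hCAdiffcard : ((G.bigC (1/65) A \ A).card : ℝ) ≤ (4/65) * A.card :=
    le_trans (cardle hCAdiff) hWcard
  -- part (iii)
  have hiii : G.deltaClean (13 * (1/65)) B (G.bigC (1/65) A) := by
    constructor
    · intro v hvCA hvB
      have hsplitneg : G.negNbr v ∩ G.bigC (1/65) A ⊆
          (G.negNbr v ∩ A) ∪ (G.bigC (1/65) A \ A) := by
        intro u hu
        rw [Finset.mem_inter] at hu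
        by_cases h : u ∈ A
        · exact Finset.mem_union_left _ (Finset.mem_inter.mpr ⟨hu.1, h⟩)
        · exact Finset.mem_union_right _ (Finset.mem_sdiff.mpr ⟨hu.2, h⟩)
      have hposout : G.posNbr v \ G.bigC (1/65) A ⊆ G.posNbr v \ A :=
        Finset.sdiff_subset_sdiff le_rfl hAbigC
      by_cases hvA : v ∈ A
      · have hg := hAgood v hvA hvB
        constructor
        · have := cardsub2 hsplitneg
          have := hg.1
          linarith
        · have := cardle hposout
          have := hg.2
          linarith
      · have hvVp : v ∈ G.Vprime (1/65) A := by
          rcases Finset.mem_union.mp hvCA with h | h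
          · exact absurd h hvA
          · exact h
        obtain ⟨hv1, hv2⟩ := (hmemVp v).mp hvVp
        have hdisj : Disjoint (G.negNbr v ∩ A) (G.posNbr v ∩ A) := by
          rw [Finset.disjoint_left]
          intro u hu hu'
          exact G.not_pos_and_neg ((G.mem_posNbr).mp (Finset.mem_inter.mp hu').1)
            ((G.mem_negNbr).mp (Finset.mem_inter.mp hu).1)
        have hsubA : (G.negNbr v ∩ A) ∪ (G.posNbr v ∩ A) ⊆ A :=
          Finset.union_subset Finset.inter_subset_right Finset.inter_subset_right
        have hcards : ((G.negNbr v ∩ A).card : ℝ) + ((G.posNbr v ∩ A).card : ℝ) ≤ A.card := by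
          have h1 := Finset.card_union_of_disjoint hdisj
          have h2 := Finset.card_le_card hsubA
          rw [h1] at h2
          exact_mod_cast h2
        constructor
        · have := cardsub2 hsplitneg
          linarith
        · have := cardle hposout
          linarith
    · intro hBCA
      constructor
      · have hsub : G.Eminus B (G.bigC (1/65) A \ B) ⊆
            G.Eminus B (A \ B) ∪ G.Eminus B (G.bigC (1/65) A \ A) := by
          refine Finset.Subset.trans (G.Eminus_mono B ?_) (G.Eminus_union_subset B _ _)
          intro u hu
          rw [Finset.mem_sdiff] at hu
          by_cases h : u ∈ A
          · exact Finset.mem_union_left _ (Finset.mem_sdiff.mpr ⟨h, hu.2⟩)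
          · exact Finset.mem_union_right _ (Finset.mem_sdiff.mpr ⟨hu.1, h⟩)
        have h1 : ((G.Eminus B (G.bigC (1/65) A \ B)).card : ℝ) ≤
            ((G.Eminus B (A \ B)).card : ℝ) + (G.Eminus B (G.bigC (1/65) A \ A)).card := by
          calc ((G.Eminus B (G.bigC (1/65) A \ B)).card : ℝ)
              ≤ ((G.Eminus B (A \ B) ∪ G.Eminus B (G.bigC (1/65) A \ A)).card : ℝ) := by
                exact_mod_cast Finset.card_le_card hsub
            _ ≤ _ := by exact_mod_cast Finset.card_union_le _ _
        have h2 : ((G.Eminus B (G.bigC (1/65) A \ A)).card : ℝ) ≤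
            (B.card : ℝ) * ((G.bigC (1/65) A \ A).card : ℝ) := by
          exact_mod_cast G.card_Eminus_le B _
        have h3 := hBgoodA.1
        have h4 : (B.card : ℝ) * ((G.bigC (1/65) A \ A).card : ℝ) ≤
            (B.card : ℝ) * ((4/65) * A.card) :=
          mul_le_mul_of_nonneg_left hCAdiffcard (by positivity)
        have h5 : (7/65 : ℝ) * B.card * A.card ≤
            (13 * (1/65)) * B.card * (G.bigC (1/65) A).card := by
          nlinarith [mul_le_mul_of_nonneg_left hCAlow (show (0:ℝ) ≤ (B.card:ℝ) by linarith)]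
        linarith
      · have hsub : G.Eplus B (G.bigC (1/65) A)ᶜ ⊆ G.Eplus B Aᶜ := by
          refine G.Eplus_mono B ?_
          intro u hu
          rw [Finset.mem_compl] at hu ⊢
          exact fun h => hu (hAbigC h)
        have h1 : ((G.Eplus B (G.bigC (1/65) A)ᶜ).card : ℝ) ≤ (G.Eplus B Aᶜ).card := by
          exact_mod_cast Finset.card_le_card hsub
        have h3 := hBgoodA.2
        have h5 : (3 * (1/65) : ℝ) * B.card * A.card ≤
            (13 * (1/65)) * B.card * (G.bigC (1/65) A).card := by
          nlinarith [mul_le_mul_of_nonneg_left hCAlow (show (0:ℝ) ≤ (B.card:ℝ) by linarith)]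
        linarith
  have cardun : ∀ s t : Finset V, (((s ∪ t).card : ℝ)) ≤ (s.card : ℝ) + t.card := by
    intro s t; exact_mod_cast Finset.card_union_le s t
  have hCB65A : (CB.card : ℝ) ≤ (65/64) * A.card := by linarith
  -- part (iv)
  have hiv : CB ⊆ G.bigC (1/65) A := by
    intro v hvCB
    by_cases hvB : v ∈ B
    · exact hAbigC (hBA hvB)
    · have hvg := hgoodCB v hvCB hvB
      refine Finset.mem_union_right _ ((hmemVp v).mpr ⟨?_, ?_⟩)
      · have hsub : A ⊆ (A \ CB) ∪ {v} ∪ B ∪ (G.negNbr v ∩ CB) ∪ (G.posNbr v ∩ A) := by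
          intro u hu
          by_cases huCB : u ∈ CB
          · by_cases huv : u = v
            · exact Finset.mem_union_left _ (Finset.mem_union_left _
                (Finset.mem_union_left _ (Finset.mem_union_right _
                  (Finset.mem_singleton.mpr huv))))
            · by_cases huB : u ∈ B
              · exact Finset.mem_union_left _ (Finset.mem_union_left _
                  (Finset.mem_union_right _ huB))
              · rcases hGB.1 v u hvB huB (fun h => huv h.symm) with h | h
                · exact Finset.mem_union_right _
                    (Finset.mem_inter.mpr ⟨(G.mem_posNbr).mpr h, hu⟩)
                · exact Finset.mem_union_left _ (Finset.mem_union_right _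
                    (Finset.mem_inter.mpr ⟨(G.mem_negNbr).mpr h, huCB⟩))
          · exact Finset.mem_union_left _ (Finset.mem_union_left _
              (Finset.mem_union_left _ (Finset.mem_union_left _
                (Finset.mem_sdiff.mpr ⟨hu, huCB⟩))))
        have c0 := cardle hsub
        have c1 := cardun ((A \ CB) ∪ {v} ∪ B ∪ (G.negNbr v ∩ CB)) (G.posNbr v ∩ A)
        have c2 := cardun ((A \ CB) ∪ {v} ∪ B) (G.negNbr v ∩ CB)
        have c3 := cardun ((A \ CB) ∪ {v}) B
        have c4 := cardun (A \ CB) {v}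
        have hsing : (({v} : Finset V).card : ℝ) = 1 := by simp
        have hng := hvg.1
        linarith
      · have hsub : G.posNbr v \ A ⊆ (G.posNbr v \ CB) ∪ (CB \ A) := by
          intro u hu
          rw [Finset.mem_sdiff] at hu
          by_cases h : u ∈ CB
          · exact Finset.mem_union_right _ (Finset.mem_sdiff.mpr ⟨h, hu.2⟩)
          · exact Finset.mem_union_left _ (Finset.mem_sdiff.mpr ⟨hu.1, h⟩)
        have := cardsub2 hsub
        have := hvg.2
        linarith
  -- part (v)
  have hv5 : ∀ C' ∈ P, C' ≠ CB → 2 ≤ C'.card → (∀ v ∈ C', v ∉ B) →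
      Disjoint (G.bigC (1/65) A) C' := by
    intro C' hC'P hC'ne hC'2 hC'good
    rw [Finset.disjoint_left]
    intro v hvCA hvC'
    exfalso
    have hvB := hC'good v hvC'
    have hC'clean := hclean C' hC'P hC'2 ⟨v, hvC', hvB⟩
    have hvgC' := hC'clean.1 v hvC' hvB
    have hdisjCB : Disjoint CB C' := hP.2.1 CB hCBP C' hC'P (fun h => hC'ne h.symm)
    have hstats : (56/65 : ℝ) * A.card ≤ ((G.posNbr v ∩ A).card : ℝ) ∧
        ((G.posNbr v \ A).card : ℝ) ≤ (9/65) * A.card := by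
      by_cases hvA : v ∈ A
      · have hg := hAgood v hvA hvB
        constructor
        · have hsub : A ⊆ {v} ∪ B ∪ (G.negNbr v ∩ A) ∪ (G.posNbr v ∩ A) := by
            intro u hu
            by_cases huv : u = v
            · exact Finset.mem_union_left _ (Finset.mem_union_left _
                (Finset.mem_union_left _ (Finset.mem_singleton.mpr huv)))
            · by_cases huB : u ∈ B
              · exact Finset.mem_union_left _ (Finset.mem_union_left _
                  (Finset.mem_union_right _ huB))
              · rcases hGB.1 v u hvB huB (fun h => huv h.symm) with h | h
                · exact Finset.mem_union_right _
                    (Finset.mem_inter.mpr ⟨(G.mem_posNbr).mpr h, hu⟩)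
                · exact Finset.mem_union_left _ (Finset.mem_union_right _
                    (Finset.mem_inter.mpr ⟨(G.mem_negNbr).mpr h, hu⟩))
          have c0 := cardle hsub
          have c1 := cardun ({v} ∪ B ∪ (G.negNbr v ∩ A)) (G.posNbr v ∩ A)
          have c2 := cardun ({v} ∪ B) (G.negNbr v ∩ A)
          have c3 := cardun {v} B
          have hsing : (({v} : Finset V).card : ℝ) = 1 := by simp
          have hng := hg.1
          linarith
        · have := hg.2; linarith
      · have hvVp : v ∈ G.Vprime (1/65) A := by
          rcases Finset.mem_union.mp hvCA with h | h
          · exact absurd h hvA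
          · exact h
        obtain ⟨h1, h2⟩ := (hmemVp v).mp hvVp
        exact ⟨by linarith, by linarith⟩
    obtain ⟨hp1, hp2⟩ := hstats
    have hAC' : ((A ∩ C').card : ℝ) ≤ (3/65) * A.card := by
      have hdisj2 : Disjoint (A ∩ CB) (A ∩ C') := by
        rw [Finset.disjoint_left]
        intro u hu hu'
        exact Finset.disjoint_left.mp hdisjCB (Finset.mem_inter.mp hu).2
          (Finset.mem_inter.mp hu').2
      have h1 : (A ∩ CB).card + (A ∩ C').card ≤ A.card := by
        rw [← Finset.card_union_of_disjoint hdisj2]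
        exact Finset.card_le_card
          (Finset.union_subset Finset.inter_subset_left Finset.inter_subset_left)
      have h1' : ((A ∩ CB).card : ℝ) + ((A ∩ C').card : ℝ) ≤ A.card := by exact_mod_cast h1
      have e1 : (CB ∩ A).card + (CB \ A).card = CB.card :=
        Finset.card_inter_add_card_sdiff CB A
      have e2 : A ∩ CB = CB ∩ A := Finset.inter_comm A CB
      have e1' : ((A ∩ CB).card : ℝ) + ((CB \ A).card : ℝ) = CB.card := by
        rw [e2]; exact_mod_cast e1
      linarith
    have hupC' : (64/65 : ℝ) * C'.card ≤ 1 + (12/65) * A.card := by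
      have hsubq : G.posNbr v ∩ C' ⊆ (G.posNbr v \ A) ∪ (A ∩ C') := by
        intro u hu
        rw [Finset.mem_inter] at hu
        by_cases h : u ∈ A
        · exact Finset.mem_union_right _ (Finset.mem_inter.mpr ⟨h, hu.2⟩)
        · exact Finset.mem_union_left _ (Finset.mem_sdiff.mpr ⟨hu.1, h⟩)
      have hq := cardsub2 hsubq
      have hsub : C' ⊆ {v} ∪ (G.negNbr v ∩ C') ∪ (G.posNbr v ∩ C') := by
        intro u hu
        by_cases huv : u = v
        · exact Finset.mem_union_left _ (Finset.mem_union_left _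
            (Finset.mem_singleton.mpr huv))
        · rcases hGB.1 v u hvB (hC'good u hu) (fun h => huv h.symm) with h | h
          · exact Finset.mem_union_right _
              (Finset.mem_inter.mpr ⟨(G.mem_posNbr).mpr h, hu⟩)
          · exact Finset.mem_union_left _ (Finset.mem_union_right _
              (Finset.mem_inter.mpr ⟨(G.mem_negNbr).mpr h, hu⟩))
      have c0 := cardle hsub
      have c1 := cardun ({v} ∪ (G.negNbr v ∩ C')) (G.posNbr v ∩ C')
      have c2 := cardun {v} (G.negNbr v ∩ C')
      have hsing : (({v} : Finset V).card : ℝ) = 1 := by simp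
      have hng := hvgC'.1
      linarith
    have hlowC' : (53 : ℝ) * A.card ≤ C'.card := by
      have hsub : G.posNbr v ∩ A ⊆ (A ∩ C') ∪ (G.posNbr v \ C') := by
        intro u hu
        rw [Finset.mem_inter] at hu
        by_cases h : u ∈ C'
        · exact Finset.mem_union_left _ (Finset.mem_inter.mpr ⟨hu.2, h⟩)
        · exact Finset.mem_union_right _ (Finset.mem_sdiff.mpr ⟨hu.1, h⟩)
      have := cardsub2 hsub
      have := hvgC'.2
      linarith
    linarith
  exact ⟨⟨hBgoodA, hxgoodA, Finset.union_subset hBA (Finset.singleton_subset_iff.mpr hxA)⟩,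
    hii, hiii, hiv, hv5⟩
end

section
/- Set δ = 1/65. Let 𝒪 be a clustering of V in which B is contained in a single cluster C_B and every cluster of size at least two that contains at least one good vertex is δ-clean; let C_1, …, C_t be the clusters of 𝒪 of size at least two that contain only good vertices, and let S be the union of the singleton clusters of 𝒪. Suppose |N⁺(B)| > 2|B|² + (2/δ)·|B|. For each v ∈ N⁺(B), let A_v be the result of some valid cleaning run from v, and set C(v) = C(A_v) if both B and v are 3δ-good w.r.t. A_v, and C(v) = {v} otherwise. Suppose y ∈ N⁺(B) satisfies: B and y are 3δ-good w.r.t. A_y; |A_y| > (1/δ)·|B|; C(y) is 13δ-clean; and |E⁺(B, V \ C(y))| ≤ |E⁺(B, V \ C(v))| for every v ∈ N⁺(B). Then one of the following three conditions holds: (1) C(y) \ B ⊆ S; (2) C_B ⊆ C(y) and C(y) ∩ C_i = ∅ for every i ∈ {1,…,t}; (3) there exists j ∈ {1,…,t} with C_j ⊆ C(y), C(y) ∩ C_B = B, and C(y) ∩ C_i = ∅ for every i ∈ {1,…,t} with i ≠ j. -/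
open scoped Classical

section Aux

variable {V : Type*} [Fintype V] [DecidableEq V]

private lemma aux_mem_posNbr (G : SignedGraph V) {v u : V} :
    u ∈ G.posNbr v ↔ G.posAdj v u := by
  simp [SignedGraph.posNbr]

private lemma aux_mem_negNbr (G : SignedGraph V) {v u : V} :
    u ∈ G.negNbr v ↔ G.negAdj v u := by
  simp [SignedGraph.negNbr]

private lemma aux_posAdj_symm (G : SignedGraph V) {u v : V} (h : G.posAdj u v) :
    G.posAdj v u := by
  unfold SignedGraph.posAdj at *
  rwa [Sym2.eq_swap]

private lemma aux_negAdj_symm (G : SignedGraph V) {u v : V} (h : G.negAdj u v) :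
    G.negAdj v u := by
  unfold SignedGraph.negAdj at *
  rwa [Sym2.eq_swap]

/-- Basic facts about the result of a valid cleaning run. -/
private lemma aux_run (G : SignedGraph V) (d : ℝ) (B : Finset V) (x : V) (AF : Finset V)
    (h : G.ValidCleaningRun d B x AF) :
    B ⊆ AF ∧ x ∈ AF ∧ ∀ v ∈ AF, v ≠ x → v ∉ B → G.deltaGood (3 * d) v AF := by
  obtain ⟨m, f, h0, hstep, hfin, hAeq⟩ := h
  subst hAeq
  have hkey : ∀ i, i ≤ m → B ⊆ f i ∧ x ∈ f i := by
    intro i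
    induction i with
    | zero =>
      intro _
      rw [h0]
      exact ⟨Finset.subset_union_right, Finset.mem_union_left _ (Finset.mem_insert_self _ _)⟩
    | succ k ih =>
      intro hk
      obtain ⟨hB, hx⟩ := ih (Nat.le_of_succ_le hk)
      obtain ⟨v, hv, hvx, hvB, _, hfe⟩ := hstep k (Nat.lt_of_succ_le hk)
      rw [hfe]
      exact ⟨fun b hb => Finset.mem_erase.2 ⟨fun e => hvB (e ▸ hb), hB hb⟩,
        Finset.mem_erase.2 ⟨fun e => hvx e.symm, hx⟩⟩
  obtain ⟨hB, hx⟩ := hkey m le_rfl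
  exact ⟨hB, hx, hfin⟩

/-- The key counting lemma: if a `δ`-clean cluster `C` meets `Cy` in a good
vertex, then `C ⊆ Cy` and `C` covers more than half of `AY`. -/
private lemma aux_key (G : SignedGraph V) (B : Finset V)
    (hGB : G.GoodBadStructure B)
    (AY Cy : Finset V) (hBA : B ⊆ AY) (hACy : AY ⊆ Cy)
    (hb1 : 1 ≤ B.card)
    (hcard : 65 * B.card + 1 ≤ AY.card)
    (hA3 : ∀ w ∈ AY, w ∉ B → ((G.negNbr w ∩ AY).card : ℝ) ≤ 3/65 * AY.card ∧
      ((G.posNbr w \ AY).card : ℝ) ≤ 3/65 * AY.card)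
    (hP12 : ∀ w ∈ Cy, w ∉ B →
      (56/65 : ℝ) * AY.card ≤ ((G.posNbr w ∩ AY).card : ℝ) ∧
      ((G.posNbr w \ AY).card : ℝ) ≤ 9/65 * AY.card)
    (hVp : ∀ u : V, (56/65 : ℝ) * AY.card ≤ ((G.posNbr u ∩ AY).card : ℝ) →
      ((G.posNbr u \ AY).card : ℝ) ≤ 9/65 * AY.card → u ∈ Cy)
    (C : Finset V)
    (hC : ∀ u ∈ C, u ∉ B → ((G.negNbr u ∩ C).card : ℝ) ≤ 1/65 * C.card ∧
      ((G.posNbr u \ C).card : ℝ) ≤ 1/65 * C.card)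
    (v : V) (hvC : v ∈ C) (hvCy : v ∈ Cy) (hvB : v ∉ B) :
    C ⊆ Cy ∧ (AY.card : ℝ) < 2 * ((C ∩ AY).card : ℝ) := by
  classical
  have hn66 : (66 : ℝ) ≤ (AY.card : ℝ) := by
    have : 66 ≤ AY.card := by omega
    exact_mod_cast this
  have hbn : 65 * (B.card : ℝ) + 1 ≤ (AY.card : ℝ) := by exact_mod_cast hcard
  have adj : ∀ a b : V, a ∉ B → b ∉ B → a ≠ b → a ∈ G.posNbr b ∨ a ∈ G.negNbr b := by
    intro a b ha hb hab
    rcases hGB.1 a b ha hb hab with h | h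
    · exact Or.inl ((aux_mem_posNbr G).2 (aux_posAdj_symm G h))
    · exact Or.inr ((aux_mem_negNbr G).2 (aux_negAdj_symm G h))
  obtain ⟨hv1, hv2⟩ := hP12 v hvCy hvB
  obtain ⟨hvnC, hvpC⟩ := hC v hvC hvB
  -- generic bound on |C \ AY| via a good vertex v0 of C
  have hCA : ∀ v0 ∈ C, v0 ∉ B → ∀ β : ℝ, ((G.posNbr v0 \ AY).card : ℝ) ≤ β →
      ((C \ AY).card : ℝ) ≤ β + 1/65 * C.card + 1 := by
    intro v0 hv0C hv0B β hβ
    have hsub : C \ AY ⊆ (G.posNbr v0 \ AY) ∪ (G.negNbr v0 ∩ C) ∪ {v0} := by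
      intro w hw
      rw [Finset.mem_sdiff] at hw
      have hwB : w ∉ B := fun h => hw.2 (hBA h)
      by_cases hwv : w = v0
      · exact Finset.mem_union_right _ (Finset.mem_singleton.2 hwv)
      · rcases adj w v0 hwB hv0B hwv with h | h
        · exact Finset.mem_union_left _ (Finset.mem_union_left _ (Finset.mem_sdiff.2 ⟨h, hw.2⟩))
        · exact Finset.mem_union_left _ (Finset.mem_union_right _ (Finset.mem_inter.2 ⟨h, hw.1⟩))
    have t1 := Finset.card_le_card hsub
    have t2 := Finset.card_union_le ((G.posNbr v0 \ AY) ∪ (G.negNbr v0 ∩ C)) ({v0} : Finset V)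
    have t3 := Finset.card_union_le (G.posNbr v0 \ AY) (G.negNbr v0 ∩ C)
    have t4 : ({v0} : Finset V).card = 1 := Finset.card_singleton v0
    have t5 : ((C \ AY).card : ℝ) ≤ ((G.posNbr v0 \ AY).card : ℝ) +
        ((G.negNbr v0 ∩ C).card : ℝ) + 1 := by
      have h5 : (C \ AY).card ≤ (G.posNbr v0 \ AY).card + (G.negNbr v0 ∩ C).card + 1 := by omega
      exact_mod_cast h5
    have hnC := (hC v0 hv0C hv0B).1
    linarith
  have hsubCA : (C.card : ℝ) ≤ (AY.card : ℝ) + ((C \ AY).card : ℝ) := by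
    have hsub : C ⊆ AY ∪ (C \ AY) := by
      intro w hw
      by_cases h : w ∈ AY
      · exact Finset.mem_union_left _ h
      · exact Finset.mem_union_right _ (Finset.mem_sdiff.2 ⟨hw, h⟩)
    have t1 := Finset.card_le_card hsub
    have t2 := Finset.card_union_le AY (C \ AY)
    have h5 : C.card ≤ AY.card + (C \ AY).card := by omega
    exact_mod_cast h5
  -- phase 1: using v
  have e2 : ((C \ AY).card : ℝ) ≤ 9/65 * AY.card + 1/65 * C.card + 1 := hCA v hvC hvB _ hv2
  have ec : (C.card : ℝ) ≤ 75/64 * AY.card := by linarith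
  have e1 : ((AY \ C).card : ℝ) ≤ ((AY.card : ℝ) - 56/65 * AY.card) + 1/65 * C.card := by
    have hsub : AY \ C ⊆ (AY \ G.posNbr v) ∪ (G.posNbr v \ C) := by
      intro w hw
      rw [Finset.mem_sdiff] at hw
      by_cases h : w ∈ G.posNbr v
      · exact Finset.mem_union_right _ (Finset.mem_sdiff.2 ⟨h, hw.2⟩)
      · exact Finset.mem_union_left _ (Finset.mem_sdiff.2 ⟨hw.1, h⟩)
    have t1 := Finset.card_le_card hsub
    have t2 := Finset.card_union_le (AY \ G.posNbr v) (G.posNbr v \ C)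
    have t3 := Finset.card_inter_add_card_sdiff AY (G.posNbr v)
    rw [Finset.inter_comm] at t3
    have t5 : ((AY \ C).card : ℝ) ≤ ((AY \ G.posNbr v).card : ℝ) + ((G.posNbr v \ C).card : ℝ) := by
      have h5 : (AY \ C).card ≤ (AY \ G.posNbr v).card + (G.posNbr v \ C).card := by omega
      exact_mod_cast h5
    have t6 : ((G.posNbr v ∩ AY).card : ℝ) + ((AY \ G.posNbr v).card : ℝ) = (AY.card : ℝ) := by
      exact_mod_cast t3
    linarith
  have hIdent : ((AY ∩ C).card : ℝ) + ((AY \ C).card : ℝ) = (AY.card : ℝ) := by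
    exact_mod_cast Finset.card_inter_add_card_sdiff AY C
  have hCint : C ∩ AY = AY ∩ C := Finset.inter_comm _ _
  have hhalf : (AY.card : ℝ) < 2 * ((C ∩ AY).card : ℝ) := by
    rw [hCint]
    linarith
  -- phase 2: find a good vertex v' of C inside AY
  have hex : ∃ v', v' ∈ C ∧ v' ∈ AY ∧ v' ∉ B := by
    have t1 : (AY ∩ C).card ≤ ((AY ∩ C) \ B).card + B.card :=
      Finset.card_le_card_sdiff_add_card
    have t1' : ((AY ∩ C).card : ℝ) ≤ (((AY ∩ C) \ B).card : ℝ) + (B.card : ℝ) := by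
      exact_mod_cast t1
    have t2 : (0 : ℝ) < (((AY ∩ C) \ B).card : ℝ) := by linarith
    have t3 : 0 < ((AY ∩ C) \ B).card := by exact_mod_cast t2
    obtain ⟨v', hv'⟩ := Finset.card_pos.1 t3
    rw [Finset.mem_sdiff, Finset.mem_inter] at hv'
    exact ⟨v', hv'.1.2, hv'.1.1, hv'.2⟩
  obtain ⟨v', hv'C, hv'A, hv'B⟩ := hex
  obtain ⟨hv'nA, hv'pA⟩ := hA3 v' hv'A hv'B
  obtain ⟨hv'nC, hv'pC⟩ := hC v' hv'C hv'B
  have f1 : ((C \ AY).card : ℝ) ≤ 3/65 * AY.card + 1/65 * C.card + 1 := hCA v' hv'C hv'B _ hv'pA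
  have f2 : (C.card : ℝ) ≤ 69/64 * AY.card := by linarith
  have f3 : ((C \ AY).card : ℝ) ≤ 325/4160 * AY.card := by linarith
  have f4 : ((AY \ C).card : ℝ) ≤ 261/4160 * AY.card + ((B \ C).card : ℝ) := by
    have hsub : AY \ C ⊆ (G.negNbr v' ∩ AY) ∪ (B \ C) ∪ (G.posNbr v' \ C) := by
      intro w hw
      rw [Finset.mem_sdiff] at hw
      by_cases hwB : w ∈ B
      · exact Finset.mem_union_left _ (Finset.mem_union_right _ (Finset.mem_sdiff.2 ⟨hwB, hw.2⟩))
      · have hwv : w ≠ v' := fun e => hw.2 (e ▸ hv'C)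
        rcases adj w v' hwB hv'B hwv with h | h
        · exact Finset.mem_union_right _ (Finset.mem_sdiff.2 ⟨h, hw.2⟩)
        · exact Finset.mem_union_left _ (Finset.mem_union_left _ (Finset.mem_inter.2 ⟨h, hw.1⟩))
    have t1 := Finset.card_le_card hsub
    have t2 := Finset.card_union_le ((G.negNbr v' ∩ AY) ∪ (B \ C)) (G.posNbr v' \ C)
    have t3 := Finset.card_union_le (G.negNbr v' ∩ AY) (B \ C)
    have t5 : ((AY \ C).card : ℝ) ≤ ((G.negNbr v' ∩ AY).card : ℝ) + ((B \ C).card : ℝ) +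
        ((G.posNbr v' \ C).card : ℝ) := by
      have h5 : (AY \ C).card ≤ (G.negNbr v' ∩ AY).card + (B \ C).card +
          (G.posNbr v' \ C).card := by omega
      exact_mod_cast h5
    linarith
  have hBsplit : ((B ∩ C).card : ℝ) + ((B \ C).card : ℝ) = (B.card : ℝ) := by
    exact_mod_cast Finset.card_inter_add_card_sdiff B C
  have hsubset : C ⊆ Cy := by
    intro u huC
    by_cases huB : u ∈ B
    · exact hACy (hBA huB)
    obtain ⟨hunC, hupC⟩ := hC u huC huB
    have g1 : ((AY ∩ C).card : ℝ) ≤ ((G.posNbr u ∩ AY).card : ℝ) +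
        (((G.negNbr u ∩ C).card : ℝ) + ((B ∩ C).card : ℝ) + 1) := by
      have hsub : (AY ∩ C) \ ((G.negNbr u ∩ C) ∪ (B ∩ C) ∪ {u}) ⊆ G.posNbr u ∩ AY := by
        intro w hw
        rw [Finset.mem_sdiff, Finset.mem_inter] at hw
        obtain ⟨⟨hwA, hwC⟩, hwn⟩ := hw
        simp only [Finset.mem_union, Finset.mem_inter, Finset.mem_singleton, not_or] at hwn
        have hwB : w ∉ B := fun h => hwn.1.2 ⟨h, hwC⟩
        have hwu : w ≠ u := hwn.2
        rcases adj w u hwB huB hwu with h | h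
        · exact Finset.mem_inter.2 ⟨h, hwA⟩
        · exact absurd ⟨h, hwC⟩ hwn.1.1
      have t0 : (AY ∩ C).card ≤ ((AY ∩ C) \ ((G.negNbr u ∩ C) ∪ (B ∩ C) ∪ {u})).card +
          ((G.negNbr u ∩ C) ∪ (B ∩ C) ∪ {u}).card := Finset.card_le_card_sdiff_add_card
      have t1 := Finset.card_le_card hsub
      have t2 := Finset.card_union_le ((G.negNbr u ∩ C) ∪ (B ∩ C)) ({u} : Finset V)
      have t3 := Finset.card_union_le (G.negNbr u ∩ C) (B ∩ C)
      have t4 : ({u} : Finset V).card = 1 := Finset.card_singleton u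
      have h5 : (AY ∩ C).card ≤ (G.posNbr u ∩ AY).card +
          ((G.negNbr u ∩ C).card + (B ∩ C).card + 1) := by omega
      exact_mod_cast h5
    have V1 : (56/65 : ℝ) * AY.card ≤ ((G.posNbr u ∩ AY).card : ℝ) := by linarith
    have V2 : ((G.posNbr u \ AY).card : ℝ) ≤ 9/65 * AY.card := by
      have hsub : G.posNbr u \ AY ⊆ (G.posNbr u \ C) ∪ (C \ AY) := by
        intro w hw
        rw [Finset.mem_sdiff] at hw
        by_cases h : w ∈ C
        · exact Finset.mem_union_right _ (Finset.mem_sdiff.2 ⟨h, hw.2⟩)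
        · exact Finset.mem_union_left _ (Finset.mem_sdiff.2 ⟨hw.1, h⟩)
      have t1 := Finset.card_le_card hsub
      have t2 := Finset.card_union_le (G.posNbr u \ C) (C \ AY)
      have t5 : ((G.posNbr u \ AY).card : ℝ) ≤ ((G.posNbr u \ C).card : ℝ) +
          ((C \ AY).card : ℝ) := by
        have h5 : (G.posNbr u \ AY).card ≤ (G.posNbr u \ C).card + (C \ AY).card := by omega
        exact_mod_cast h5
      linarith
    exact hVp u V1 V2
  exact ⟨hsubset, hhalf⟩

end Aux


/-- three cases for `C(y)`: for `δ = 1/65`, with a clustering as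
in Lemma `stmt6`, `|N⁺(B)| > 2|B|² + (2/δ)|B|`, clusters `C_1, …, C_t` (of size
≥ 2, containing only good vertices, different from `C_B`) and `S` the union of
singleton clusters; given for each `v ∈ N⁺(B)` a result `A v` of a valid
cleaning run from `v` with `C(v)` defined accordingly, and given `y ∈ N⁺(B)`
with `B, y` `3δ`-good w.r.t. `A y`, `|A y| > (1/δ)|B|`, `C(y)` `13δ`-clean and
`|E⁺(B, V \ C(y))|` minimal, one of the three stated conditions holds. -/
theorem stmt7 {V : Type*} [Fintype V] [DecidableEq V] (G : SignedGraph V)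
    (B : Finset V) (hGB : G.GoodBadStructure B)
    (δ : ℝ) (hδ : δ = 1 / 65)
    (P : Finset (Finset V)) (hP : SignedGraph.IsClustering P)
    (CB : Finset V) (hCBP : CB ∈ P) (hBCB : B ⊆ CB)
    (hclean : ∀ C ∈ P, 2 ≤ C.card → (∃ v ∈ C, v ∉ B) → G.deltaClean δ B C)
    (hN : 2 * (B.card : ℝ) ^ 2 + (2 / δ) * (B.card : ℝ) < ((G.posNbrSet B).card : ℝ))
    (A : V → Finset V) (hA : ∀ v ∈ G.posNbrSet B, G.ValidCleaningRun δ B v (A v))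
    (Cv : V → Finset V)
    (hCv : ∀ v ∈ G.posNbrSet B,
      Cv v = if G.deltaGoodB (3 * δ) B (A v) ∧ G.deltaGood (3 * δ) v (A v)
        then G.bigC δ (A v) else {v})
    (y : V) (hy : y ∈ G.posNbrSet B)
    (hy1 : G.deltaGoodB (3 * δ) B (A y) ∧ G.deltaGood (3 * δ) y (A y))
    (hy2 : (1 / δ) * (B.card : ℝ) < ((A y).card : ℝ))
    (hy3 : G.deltaClean (13 * δ) B (Cv y))
    (hy4 : ∀ v ∈ G.posNbrSet B,
      (G.Eplus B (Cv y)ᶜ).card ≤ (G.Eplus B (Cv v)ᶜ).card) :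
    -- Condition 1: C(y) \ B ⊆ S (the union of singleton clusters)
    (Cv y \ B ⊆ Finset.univ.filter (fun v => ({v} : Finset V) ∈ P)) ∨
    -- Condition 2: C_B ⊆ C(y) and C(y) ∩ C_i = ∅ for every i
    (CB ⊆ Cv y ∧ ∀ C' ∈ P, C' ≠ CB → 2 ≤ C'.card → (∀ v ∈ C', v ∉ B) →
      Disjoint (Cv y) C') ∨
    -- Condition 3: some C_j ⊆ C(y), C(y) ∩ C_B = B, and C(y) ∩ C_i = ∅ for i ≠ j
    (∃ Cj ∈ P, Cj ≠ CB ∧ 2 ≤ Cj.card ∧ (∀ v ∈ Cj, v ∉ B) ∧ Cj ⊆ Cv y ∧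
      Cv y ∩ CB = B ∧
      ∀ C' ∈ P, C' ≠ CB → 2 ≤ C'.card → (∀ v ∈ C', v ∉ B) → C' ≠ Cj →
        Disjoint (Cv y) C') := by
  classical
  subst hδ
  have hy' : y ∉ B ∧ ∃ u ∈ B, G.posAdj y u := by
    simpa [SignedGraph.posNbrSet] using hy
  obtain ⟨hyB, u0, hu0B, hyu0⟩ := hy'
  obtain ⟨hBA, hyA, hrun⟩ := aux_run G (1/65) B y (A y) (hA y hy)
  have hCy : Cv y = A y ∪ G.Vprime (1/65) (A y) := by
    rw [hCv y hy, if_pos hy1]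
    rfl
  have hACy : A y ⊆ Cv y := by rw [hCy]; exact Finset.subset_union_left
  have hb1 : 1 ≤ B.card := Finset.card_pos.2 ⟨u0, hu0B⟩
  have hcard65 : 65 * B.card + 1 ≤ (A y).card := by
    have h2 : (65 : ℝ) * (B.card : ℝ) < ((A y).card : ℝ) := by
      have h3 := hy2
      norm_num at h3
      linarith
    have h3 : 65 * B.card < (A y).card := by exact_mod_cast h2
    omega
  have hn66 : 66 ≤ (A y).card := by omega
  have hncast : (66 : ℝ) ≤ ((A y).card : ℝ) := by exact_mod_cast hn66
  have hbncast : 65 * (B.card : ℝ) + 1 ≤ ((A y).card : ℝ) := by exact_mod_cast hcard65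
  have adj : ∀ a b : V, a ∉ B → b ∉ B → a ≠ b → a ∈ G.posNbr b ∨ a ∈ G.negNbr b := by
    intro a b ha hb hab
    rcases hGB.1 a b ha hb hab with h | h
    · exact Or.inl ((aux_mem_posNbr G).2 (aux_posAdj_symm G h))
    · exact Or.inr ((aux_mem_negNbr G).2 (aux_negAdj_symm G h))
  have hA3 : ∀ w ∈ A y, w ∉ B → ((G.negNbr w ∩ A y).card : ℝ) ≤ 3/65 * (A y).card ∧
      ((G.posNbr w \ A y).card : ℝ) ≤ 3/65 * (A y).card := by
    intro w hw hwB
    by_cases hwy : w = y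
    · subst hwy
      obtain ⟨a, b⟩ := hy1.2
      norm_num at a b
      exact ⟨by linarith, by linarith⟩
    · obtain ⟨a, b⟩ := hrun w hw hwy hwB
      norm_num at a b
      exact ⟨by linarith, by linarith⟩
  have hP12 : ∀ w ∈ Cv y, w ∉ B →
      (56/65 : ℝ) * (A y).card ≤ ((G.posNbr w ∩ A y).card : ℝ) ∧
      ((G.posNbr w \ A y).card : ℝ) ≤ 9/65 * (A y).card := by
    intro w hw hwB
    rw [hCy, Finset.mem_union] at hw
    rcases hw with hw | hw
    · obtain ⟨a, b⟩ := hA3 w hw hwB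
      constructor
      · have hsub : A y \ ((G.negNbr w ∩ A y) ∪ B ∪ {w}) ⊆ G.posNbr w ∩ A y := by
          intro z hz
          rw [Finset.mem_sdiff] at hz
          obtain ⟨hzA, hzn⟩ := hz
          simp only [Finset.mem_union, Finset.mem_inter, Finset.mem_singleton, not_or] at hzn
          have hzB : z ∉ B := hzn.1.2
          have hzw : z ≠ w := hzn.2
          rcases adj z w hzB hwB hzw with h | h
          · exact Finset.mem_inter.2 ⟨h, hzA⟩
          · exact absurd ⟨h, hzA⟩ hzn.1.1
        have t0 : (A y).card ≤ (A y \ ((G.negNbr w ∩ A y) ∪ B ∪ {w})).card +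
            ((G.negNbr w ∩ A y) ∪ B ∪ {w}).card := Finset.card_le_card_sdiff_add_card
        have t1 := Finset.card_le_card hsub
        have t2 := Finset.card_union_le ((G.negNbr w ∩ A y) ∪ B) ({w} : Finset V)
        have t3 := Finset.card_union_le (G.negNbr w ∩ A y) B
        have t4 : ({w} : Finset V).card = 1 := Finset.card_singleton w
        have t5 : (A y).card ≤ (G.posNbr w ∩ A y).card +
            ((G.negNbr w ∩ A y).card + B.card + 1) := by omega
        have t6 : ((A y).card : ℝ) ≤ ((G.posNbr w ∩ A y).card : ℝ) +
            (((G.negNbr w ∩ A y).card : ℝ) + (B.card : ℝ) + 1) := by exact_mod_cast t5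
        linarith
      · linarith
    · obtain ⟨-, c1, c2⟩ := Finset.mem_filter.1 hw
      norm_num at c1 c2
      exact ⟨by linarith, by linarith⟩
  have hVp : ∀ u : V, (56/65 : ℝ) * (A y).card ≤ ((G.posNbr u ∩ A y).card : ℝ) →
      ((G.posNbr u \ A y).card : ℝ) ≤ 9/65 * (A y).card → u ∈ Cv y := by
    intro u h1 h2
    rw [hCy]
    refine Finset.mem_union_right _ (Finset.mem_filter.2 ⟨Finset.mem_univ u, ?_, ?_⟩)
    · norm_num
      linarith
    · norm_num
      linarith
  have hkeyC : ∀ C ∈ P, 2 ≤ C.card → ∀ v, v ∈ C → v ∉ B → v ∈ Cv y →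
      C ⊆ Cv y ∧ ((A y).card : ℝ) < 2 * ((C ∩ A y).card : ℝ) := by
    intro C hCP h2C v hvC hvB hvCy
    have hcl := (hclean C hCP h2C ⟨v, hvC, hvB⟩).1
    exact aux_key G B hGB (A y) (Cv y) hBA hACy hb1 hcard65 hA3 hP12 hVp C
      (fun u hu hub => hcl u hu hub) v hvC hvCy hvB
  have hhalfdisj : ∀ C ∈ P, ∀ C' ∈ P, C ≠ C' →
      ((A y).card : ℝ) < 2 * ((C ∩ A y).card : ℝ) →
      ((A y).card : ℝ) < 2 * ((C' ∩ A y).card : ℝ) → False := by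
    intro C hCP C' hC'P hne h1 h2
    have hd : Disjoint C C' := hP.2.1 C hCP C' hC'P hne
    have hd2 : Disjoint (C ∩ A y) (C' ∩ A y) :=
      hd.mono Finset.inter_subset_left Finset.inter_subset_left
    have hsub : (C ∩ A y) ∪ (C' ∩ A y) ⊆ A y := by
      intro z hz
      rcases Finset.mem_union.1 hz with h | h
      · exact (Finset.mem_inter.1 h).2
      · exact (Finset.mem_inter.1 h).2
    have t1 := Finset.card_le_card hsub
    rw [Finset.card_union_of_disjoint hd2] at t1
    have t2 : ((C ∩ A y).card : ℝ) + ((C' ∩ A y).card : ℝ) ≤ ((A y).card : ℝ) := by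
      exact_mod_cast t1
    linarith
  by_cases hex : ∃ C ∈ P, 2 ≤ C.card ∧ ∃ v, v ∈ C ∧ v ∉ B ∧ v ∈ Cv y
  · obtain ⟨C, hCP, h2C, v, hvC, hvB, hvCy⟩ := hex
    obtain ⟨hCsub, hChalf⟩ := hkeyC C hCP h2C v hvC hvB hvCy
    by_cases hCB : C = CB
    · subst hCB
      refine Or.inr (Or.inl ⟨hCsub, ?_⟩)
      intro C' hC'P hne h2' hgood
      rw [Finset.disjoint_right]
      intro x hxC' hxCy
      have hxB : x ∉ B := hgood x hxC'
      obtain ⟨-, hC'half⟩ := hkeyC C' hC'P h2' x hxC' hxB hxCy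
      exact hhalfdisj C hCP C' hC'P (Ne.symm hne) hChalf hC'half
    · have hCgood : ∀ w ∈ C, w ∉ B := by
        intro w hw hwB
        have hd : Disjoint C CB := hP.2.1 C hCP CB hCBP hCB
        exact (Finset.disjoint_left.1 hd) hw (hBCB hwB)
      refine Or.inr (Or.inr ⟨C, hCP, hCB, h2C, hCgood, hCsub, ?_, ?_⟩)
      · apply Finset.Subset.antisymm
        · intro x hx
          rw [Finset.mem_inter] at hx
          by_contra hxB
          have h2CB : 2 ≤ CB.card := by
            have h1x := Finset.one_lt_card.2 ⟨u0, hBCB hu0B, x, hx.2, fun e => hxB (e ▸ hu0B)⟩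
            omega
          obtain ⟨-, hCBhalf⟩ := hkeyC CB hCBP h2CB x hx.2 hxB hx.1
          exact hhalfdisj C hCP CB hCBP hCB hChalf hCBhalf
        · exact Finset.subset_inter (hBA.trans hACy) hBCB
      · intro C' hC'P hne h2' hgood hneC
        rw [Finset.disjoint_right]
        intro x hxC' hxCy
        obtain ⟨-, hC'half⟩ := hkeyC C' hC'P h2' x hxC' (hgood x hxC') hxCy
        exact hhalfdisj C hCP C' hC'P (Ne.symm hneC) hChalf hC'half
  · refine Or.inl ?_
    intro w hw
    rw [Finset.mem_sdiff] at hw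
    obtain ⟨Cw, hCwP, hwCw⟩ := hP.2.2 w
    have hCw1 : Cw.card = 1 := by
      by_contra hne1
      have h1 : 1 ≤ Cw.card := Finset.card_pos.2 (hP.1 Cw hCwP)
      have h2 : 2 ≤ Cw.card := by omega
      exact hex ⟨Cw, hCwP, h2, w, hwCw, hw.2, hw.1⟩
    obtain ⟨a, ha⟩ := Finset.card_eq_one.1 hCw1
    rw [ha, Finset.mem_singleton] at hwCw
    subst hwCw
    rw [Finset.mem_filter]
    exact ⟨Finset.mem_univ _, ha ▸ hCwP⟩
end

section
/- Let B_1, …, B_{k′} be pairwise disjoint subsets of V and let 𝒞 be a clustering of V such that each B_i is contained in a single cluster of 𝒞 and, for i ≠ j, the clusters containing B_i and B_j are different. Then there exists a set F ⊆ E⁺ with |F| ≤ m(𝒞) such that in the graph (V, E⁺ \ F), no vertex of B_i is connected by a path to any vertex of B_j for any i ≠ j. -/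
open scoped Classical

/-- if the pairwise disjoint sets `B_1, …, B_{k′}` are each
contained in a single cluster of `𝒞`, different ones in different clusters,
then there is `F ⊆ E⁺` with `|F| ≤ m(𝒞)` such that in `(V, E⁺ \ F)` no vertex
of `B_i` is connected by a path to a vertex of `B_j` for `i ≠ j`. -/
theorem stmt9 {V : Type*} [Fintype V] [DecidableEq V] (G : SignedGraph V)
    (k' : ℕ) (Bs : Fin k' → Finset V)
    (hdisj : ∀ i j, i ≠ j → Disjoint (Bs i) (Bs j))
    (P : Finset (Finset V)) (hP : SignedGraph.IsClustering P)
    (g : Fin k' → Finset V) (hg : ∀ i, g i ∈ P ∧ Bs i ⊆ g i)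
    (hginj : ∀ i j, i ≠ j → g i ≠ g j) :
    ∃ F ⊆ G.pos, F.card ≤ G.mistakes P ∧
      ∀ i j, i ≠ j → ∀ u ∈ Bs i, ∀ v ∈ Bs j,
        ¬ (SimpleGraph.fromEdgeSet ((↑(G.pos \ F) : Set (Sym2 V)))).Reachable u v := by
  refine ⟨G.pos.filter (fun e => ∃ u v : V, e = s(u, v) ∧ ¬ SignedGraph.SameCluster P u v),
    Finset.filter_subset _ _, le_add_self, ?_⟩
  intro i j hij u hu v hv hre
  -- every edge of the remaining graph joins vertices in the same cluster
  have hsame : ∀ a b : V,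
      (SimpleGraph.fromEdgeSet ((↑(G.pos \ G.pos.filter
        (fun e => ∃ u v : V, e = s(u, v) ∧ ¬ SignedGraph.SameCluster P u v)) :
        Set (Sym2 V)))).Adj a b → SignedGraph.SameCluster P a b := by
    intro a b hab
    have h1 : s(a, b) ∈ G.pos \ G.pos.filter
        (fun e => ∃ u v : V, e = s(u, v) ∧ ¬ SignedGraph.SameCluster P u v) := hab.1
    rw [Finset.mem_sdiff, Finset.mem_filter] at h1
    by_contra hnc
    exact h1.2 ⟨h1.1, a, b, rfl, hnc⟩
  -- same-cluster is transitive
  have htrans : ∀ a b c : V, SignedGraph.SameCluster P a b →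
      SignedGraph.SameCluster P b c → SignedGraph.SameCluster P a c := by
    rintro a b c ⟨C, hC, ha, hb⟩ ⟨C', hC', hb', hc⟩
    have : C = C' := by
      by_contra hne
      exact Finset.disjoint_left.mp (hP.2.1 C hC C' hC' hne) hb hb'
    exact ⟨C, hC, ha, this ▸ hc⟩
  -- reachability implies same cluster
  have hreach : SignedGraph.SameCluster P u v := by
    clear hu hv
    obtain ⟨p⟩ := hre
    induction p with
    | nil =>
      rename_i a
      obtain ⟨C, hC, hvC⟩ := hP.2.2 a
      exact ⟨C, hC, hvC, hvC⟩
    | cons h p ih => exact htrans _ _ _ (hsame _ _ h) ih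
  obtain ⟨C, hC, huC, hvC⟩ := hreach
  have hCi : C = g i := by
    by_contra hne
    exact Finset.disjoint_left.mp (hP.2.1 C hC (g i) (hg i).1 hne) huC ((hg i).2 hu)
  have hCj : C = g j := by
    by_contra hne
    exact Finset.disjoint_left.mp (hP.2.1 C hC (g j) (hg j).1 hne) hvC ((hg j).2 hv)
  exact hginj i j hij (hCi ▸ hCj)
end
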